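/- arXiv:1805.02412 — 3 statements merged into one kernel-verified Lean document; each statement's English description precedes it below -/
import Mathlib

section
/- Let G be a finite simple graph, IR an irredundant set of G, RN = V(G) \ IR, and A ⊆ RN. Then A ∈ D_RN(G) if and only if Priv_IR(A,a) ≠ ∅ for every a ∈ A and there exists I ⊆ IR such that I dominates IR \ N(A) but I does not dominate Priv_IR(A,a) for any a ∈ A. Furthermore, if I is inclusion-minimal among subsets of IR with this property, then A ∪ I is a minimal dominating set of G (i.e., I is an irredundant extension of A). -/
variable {V : Type*}

/-- The closed neighborhood `N[x]` of a vertex. -/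
def cnbr (G : SimpleGraph V) (x : V) : Set V := insert x (G.neighborSet x)

/-- `N[X] = ⋃ x ∈ X, N[x]`. -/
def cnbrSet (G : SimpleGraph V) (X : Set V) : Set V := ⋃ x ∈ X, cnbr G x

/-- `N(X) = N[X] \ X`. -/
def onbrSet (G : SimpleGraph V) (X : Set V) : Set V := cnbrSet G X \ X

/-- `D` dominates `X` if `X ⊆ N[D]`. -/
def Dominates (G : SimpleGraph V) (D X : Set V) : Prop := X ⊆ cnbrSet G D

/-- `D` is a minimal dominating set of `G`. -/
def IsMinDomSet (G : SimpleGraph V) (D : Set V) : Prop :=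
  Dominates G D Set.univ ∧ ∀ D' : Set V, D' ⊂ D → ¬ Dominates G D' Set.univ

/-- `Priv(D, x)`: private neighbors of `x` w.r.t. `D`. -/
def priv (G : SimpleGraph V) (D : Set V) (x : V) : Set V := {u | cnbr G u ∩ D = {x}}

/-- `IR` is an irredundant set of `G`. -/
def IsIrredundantSet (G : SimpleGraph V) (IR : Set V) : Prop :=
  (∀ v : V, ∃ x ∈ IR, cnbr G x ⊆ cnbr G v) ∧
  (∀ x ∈ IR, ∀ v : V, ¬ cnbr G v ⊂ cnbr G x) ∧
  (∀ x ∈ IR, ∀ y ∈ IR, x ≠ y → cnbr G x ≠ cnbr G y)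

/-- `Priv_IR(D, x) = Priv(D, x) ∩ IR`. -/
def privIR (G : SimpleGraph V) (IR D : Set V) (x : V) : Set V := priv G D x ∩ IR

/-- `A ∈ D_RN(G)`: `A` is the intersection of a minimal dominating set with `RN = V \ IR`. -/
def memDRN (G : SimpleGraph V) (IR A : Set V) : Prop :=
  ∃ D : Set V, IsMinDomSet G D ∧ A = D ∩ IRᶜ

/-- `G` is `P_k`-free: it has no induced path on `k` vertices. -/
def PkFree (G : SimpleGraph V) (k : ℕ) : Prop :=
  ¬ ∃ f : Fin k → V, Function.Injective f ∧
      ∀ i j : Fin k, G.Adj (f i) (f j) ↔ (i.val + 1 = j.val ∨ j.val + 1 = i.val)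

/-- `G` is chordal: no induced cycle on `n ≥ 4` vertices. -/
def Chordal (G : SimpleGraph V) : Prop :=
  ∀ n : ℕ, 4 ≤ n → ¬ ∃ f : ZMod n → V, Function.Injective f ∧
      ∀ i j : ZMod n, G.Adj (f i) (f j) ↔ (i = j + 1 ∨ j = i + 1)

/-- `C` is a connected component of the subgraph of `G` induced by `S`. -/
def IsCompOf (G : SimpleGraph V) (S C : Set V) : Prop :=
  C ⊆ S ∧ C.Nonempty ∧ (G.induce C).Connected ∧
    ∀ x ∈ C, ∀ y ∈ S, G.Adj x y → y ∈ C

/-- `B(A)`: the elements of `A` having an irredundant private neighbor in some irredundant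
component entirely contained in `N(A)`. -/
def Bset (G : SimpleGraph V) (IR A : Set V) : Set V :=
  {a ∈ A | ∃ C : Set V, IsCompOf G IR C ∧ C ⊆ onbrSet G A ∧ (privIR G IR A a ∩ C).Nonempty}

/-- Domination inside the subgraph induced by `C`: every `u ∈ X` equals, or is adjacent
(within `C`) to, some `d ∈ D`.  For `D, X ⊆ C` this is domination in `G[C]`. -/
def domIn (G : SimpleGraph V) (C D X : Set V) : Prop :=
  ∀ u ∈ X, ∃ d ∈ D, u = d ∨ (G.Adj d u ∧ d ∈ C ∧ u ∈ C)


lemma mem_cnbr_comm {G : SimpleGraph V} {u v : V} : u ∈ cnbr G v ↔ v ∈ cnbr G u := by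
  simp only [cnbr, Set.mem_insert_iff, SimpleGraph.mem_neighborSet]
  constructor <;> rintro (h | h)
  · exact Or.inl h.symm
  · exact Or.inr h.symm
  · exact Or.inl h.symm
  · exact Or.inr h.symm

lemma mem_cnbrSet {G : SimpleGraph V} {v : V} {D : Set V} :
    v ∈ cnbrSet G D ↔ ∃ d ∈ D, d ∈ cnbr G v := by
  simp only [cnbrSet, Set.mem_iUnion, exists_prop]
  exact ⟨fun ⟨d, hd, h⟩ => ⟨d, hd, mem_cnbr_comm.mp h⟩,
    fun ⟨d, hd, h⟩ => ⟨d, hd, mem_cnbr_comm.mp h⟩⟩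

lemma cnbrSet_mono {G : SimpleGraph V} {D D' : Set V} (h : D ⊆ D') :
    cnbrSet G D ⊆ cnbrSet G D' := by
  intro v hv
  rw [mem_cnbrSet] at hv ⊢
  obtain ⟨d, hd, h2⟩ := hv
  exact ⟨d, h hd, h2⟩

/-- In a minimal dominating set, every vertex has a private neighbor. -/
lemma priv_nonempty_of_minDom {G : SimpleGraph V} {D : Set V} (hD : IsMinDomSet G D)
    {a : V} (ha : a ∈ D) : (priv G D a).Nonempty := by
  by_contra hemp
  rw [Set.not_nonempty_iff_eq_empty] at hemp
  apply hD.2 (D \ {a}) (Set.sdiff_singleton_ssubset.mpr ha)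
  intro v _
  rw [mem_cnbrSet]
  obtain ⟨d, hd, hdv⟩ := mem_cnbrSet.mp (hD.1 (Set.mem_univ v))
  by_cases hcase : ∃ d ∈ D, d ≠ a ∧ d ∈ cnbr G v
  · obtain ⟨e, he, hea, hev⟩ := hcase
    exact ⟨e, ⟨he, hea⟩, hev⟩
  · push_neg at hcase
    exfalso
    have hda : d = a := by by_contra hne; exact hcase d hd hne hdv
    have : v ∈ priv G D a := by
      apply Set.eq_singleton_iff_unique_mem.mpr
      exact ⟨⟨hda ▸ hdv, ha⟩, fun x ⟨hx1, hx2⟩ => by by_contra hne; exact hcase x hx2 hne hx1⟩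
    rw [hemp] at this; exact this

/-- The extension lemma: a minimal `I` with the property yields a minimal dominating set. -/
lemma ext_lemma {G : SimpleGraph V} {IR : Set V}
    (hIR : IsIrredundantSet G IR) {A : Set V} (hA : A ⊆ IRᶜ) (I : Set V)
    (hI : I ⊆ IR ∧ Dominates G I (IR \ onbrSet G A) ∧
        ∀ a ∈ A, ¬ Dominates G I (privIR G IR A a))
    (hmin : ∀ I' : Set V, I' ⊂ I →
        ¬ (I' ⊆ IR ∧ Dominates G I' (IR \ onbrSet G A) ∧
            ∀ a ∈ A, ¬ Dominates G I' (privIR G IR A a))) :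
    IsMinDomSet G (A ∪ I) := by
  obtain ⟨hIIR, hdom, hnpriv⟩ := hI
  have hdomIR : ∀ x ∈ IR, x ∈ cnbrSet G (A ∪ I) := by
    intro x hx
    by_cases hxo : x ∈ onbrSet G A
    · exact cnbrSet_mono Set.subset_union_left hxo.1
    · exact cnbrSet_mono Set.subset_union_right (hdom ⟨hx, hxo⟩)
  constructor
  · intro v _
    obtain ⟨x, hxIR, hsub⟩ := hIR.1 v
    obtain ⟨d, hd, hdx⟩ := mem_cnbrSet.mp (hdomIR x hxIR)
    exact mem_cnbrSet.mpr ⟨d, hd, hsub hdx⟩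
  · intro D' hss hDdom
    obtain ⟨d, hd, hdD'⟩ := Set.exists_of_ssubset hss
    have hsub : D' ⊆ (A ∪ I) \ {d} :=
      fun x hx => ⟨hss.1 hx, fun hxd => hdD' (hxd ▸ hx)⟩
    have hdom' : Dominates G ((A ∪ I) \ {d}) Set.univ :=
      fun v hv => cnbrSet_mono hsub (hDdom hv)
    -- find a vertex not dominated by (A ∪ I) \ {d}
    by_cases hdA : d ∈ A
    · -- private witness for d
      have := hnpriv d hdA
      rw [Dominates, Set.not_subset] at this
      obtain ⟨x, hxpriv, hxnd⟩ := this
      obtain ⟨e, ⟨he, hed⟩, hex⟩ := mem_cnbrSet.mp (hdom' (Set.mem_univ x))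
      rcases he with he | he
      · have : e ∈ cnbr G x ∩ A := ⟨hex, he⟩
        rw [hxpriv.1] at this
        exact hed this
      · exact hxnd (mem_cnbrSet.mpr ⟨e, he, hex⟩)
    · have hdI : d ∈ I := hd.resolve_left hdA
      have hssI : I \ {d} ⊂ I := Set.sdiff_singleton_ssubset.mpr hdI
      have hP := hmin (I \ {d}) hssI
      have h3 : ∀ a ∈ A, ¬ Dominates G (I \ {d}) (privIR G IR A a) :=
        fun a ha hdd => hnpriv a ha (fun x hx => cnbrSet_mono Set.diff_subset (hdd hx))
      have h2 : ¬ Dominates G (I \ {d}) (IR \ onbrSet G A) := by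
        intro h2'
        exact hP ⟨Set.diff_subset.trans hIIR, h2', h3⟩
      rw [Dominates, Set.not_subset] at h2
      obtain ⟨w, ⟨hwIR, hwno⟩, hwnd⟩ := h2
      obtain ⟨e, ⟨he, hed⟩, hew⟩ := mem_cnbrSet.mp (hdom' (Set.mem_univ w))
      rcases he with he | he
      · -- w would be in onbrSet A
        apply hwno
        refine ⟨mem_cnbrSet.mpr ⟨e, he, hew⟩, fun hwA => ?_⟩
        exact hA hwA hwIR
      · exact hwnd (mem_cnbrSet.mpr ⟨e, ⟨he, hed⟩, hew⟩)


/-- Characterization of membership in `D_RN(G)`, plus: any inclusion-minimal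
`I ⊆ IR` dominating `IR \ N(A)` without dominating any `Priv_IR(A, a)` is an irredundant
extension of `A`. -/
theorem stmt_2 [Fintype V] (G : SimpleGraph V) (IR : Set V)
    (hIR : IsIrredundantSet G IR) (A : Set V) (hA : A ⊆ IRᶜ) :
    (memDRN G IR A ↔
      ((∀ a ∈ A, (privIR G IR A a).Nonempty) ∧
        ∃ I : Set V, I ⊆ IR ∧ Dominates G I (IR \ onbrSet G A) ∧
          ∀ a ∈ A, ¬ Dominates G I (privIR G IR A a))) ∧
    (∀ I : Set V,
      (I ⊆ IR ∧ Dominates G I (IR \ onbrSet G A) ∧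
        ∀ a ∈ A, ¬ Dominates G I (privIR G IR A a)) →
      (∀ I' : Set V, I' ⊂ I →
        ¬ (I' ⊆ IR ∧ Dominates G I' (IR \ onbrSet G A) ∧
            ∀ a ∈ A, ¬ Dominates G I' (privIR G IR A a))) →
      IsMinDomSet G (A ∪ I)) := by
  set P : Set V → Prop := fun J => J ⊆ IR ∧ Dominates G J (IR \ onbrSet G A) ∧
      ∀ a ∈ A, ¬ Dominates G J (privIR G IR A a) with hP
  refine ⟨⟨?_, ?_⟩, fun I hI hmin => ext_lemma hIR hA I hI hmin⟩
  · -- forward direction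
    rintro ⟨D, hD, rfl⟩
    set A := D ∩ IRᶜ
    set I : Set V := D ∩ IR with hIdef
    -- witness construction: for each a ∈ A, an x ∈ privIR(A,a) with x ∉ N[I]
    have hwit : ∀ a ∈ A, ∃ x, x ∈ privIR G IR A a ∧ x ∉ cnbrSet G I := by
      intro a ha
      obtain ⟨u, hu⟩ := priv_nonempty_of_minDom hD ha.1
      obtain ⟨x, hxIR, hsub⟩ := hIR.1 u
      have hxD : cnbr G x ∩ D = {a} := by
        apply Set.eq_singleton_iff_unique_mem.mpr
        constructor
        · obtain ⟨d, hd, hdx⟩ := mem_cnbrSet.mp (hD.1 (Set.mem_univ x))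
          have : d ∈ cnbr G u ∩ D := ⟨hsub hdx, hd⟩
          rw [hu] at this
          rw [← this]; exact ⟨hdx, hd⟩
        · intro y ⟨hy1, hy2⟩
          have : y ∈ cnbr G u ∩ D := ⟨hsub hy1, hy2⟩
          rw [hu] at this; exact this
      have hxA : cnbr G x ∩ A = {a} := by
        apply Set.eq_singleton_iff_unique_mem.mpr
        refine ⟨⟨(Set.eq_singleton_iff_unique_mem.mp hxD).1.1, ha⟩, ?_⟩
        intro y ⟨hy1, hy2⟩
        have : y ∈ cnbr G x ∩ D := ⟨hy1, hy2.1⟩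
        rw [hxD] at this; exact this
      refine ⟨x, ⟨hxA, hxIR⟩, fun hxN => ?_⟩
      obtain ⟨i, hi, hix⟩ := mem_cnbrSet.mp hxN
      have : i ∈ cnbr G x ∩ D := ⟨mem_cnbr_comm.mp (mem_cnbr_comm.mp hix), hi.1⟩
      rw [hxD] at this
      exact ha.2 (this ▸ hi.2)
    refine ⟨fun a ha => ⟨(hwit a ha).choose, (hwit a ha).choose_spec.1⟩,
      I, Set.inter_subset_right, ?_, ?_⟩
    · intro w ⟨hwIR, hwno⟩
      obtain ⟨e, he, hew⟩ := mem_cnbrSet.mp (hD.1 (Set.mem_univ w))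
      by_cases heIR : e ∈ IR
      · exact mem_cnbrSet.mpr ⟨e, ⟨he, heIR⟩, hew⟩
      · exfalso
        apply hwno
        refine ⟨mem_cnbrSet.mpr ⟨e, ⟨he, heIR⟩, hew⟩, fun hwA => hwA.2 hwIR⟩
    · intro a ha hdd
      obtain ⟨x, hx1, hx2⟩ := hwit a ha
      exact hx2 (hdd hx1)
  · -- backward direction
    rintro ⟨_, I, hI⟩
    have hwf : WellFounded ((· < ·) : Set V → Set V → Prop) :=
      Finite.to_wellFoundedLT.wf
    obtain ⟨I', hI'P, hI'min⟩ := hwf.has_min {J | P J} ⟨I, hI⟩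
    have hmds := ext_lemma hIR hA I' hI'P (fun J hJ hPJ => hI'min J hPJ hJ)
    refine ⟨A ∪ I', hmds, ?_⟩
    ext v
    simp only [Set.mem_inter_iff, Set.mem_union, Set.mem_compl_iff]
    constructor
    · intro hv
      exact ⟨Or.inl hv, hA hv⟩
    · rintro ⟨hv | hv, hnIR⟩
      · exact hv
      · exact absurd (hI'P.1 hv) hnIR
end

section
/- Let G be a finite simple graph, IR an irredundant set of G, and u, v ∈ IR two adjacent irredundant vertices. Then there exist vertices u' ∈ N[u] \ N[v], u'' ∈ N[u'] \ N[u], v' ∈ N[v] \ N[u], and v'' ∈ N[v'] \ N[v]. In particular, if G is chordal, then the six vertices u'', u', u, v, v', v'' (in this order) form an induced path on six vertices in G. -/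
variable {V : Type*}

lemma mem_cnbr {G : SimpleGraph V} {x y : V} : y ∈ cnbr G x ↔ y = x ∨ G.Adj x y := by
  simp [cnbr]

lemma exists_escape {G : SimpleGraph V} {IR : Set V} (h2 : ∀ x ∈ IR, ∀ w : V, ¬ cnbr G w ⊂ cnbr G x)
    {x : V} (hx : x ∈ IR) (a : V) (hne : cnbr G a ≠ cnbr G x) :
    ∃ w ∈ cnbr G a, w ∉ cnbr G x := by
  by_contra h
  push_neg at h
  exact h2 x hx a (HasSubset.Subset.ssubset_of_ne h hne)

lemma noC4 {G : SimpleGraph V} (hc : Chordal G) (a b c d : V)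
    (eab : G.Adj a b) (ebc : G.Adj b c) (ecd : G.Adj c d) (eda : G.Adj d a)
    (nac : ¬ G.Adj a c) (nbd : ¬ G.Adj b d) (dac : a ≠ c) (dbd : b ≠ d) : False := by
  have key : ∀ i : ZMod 4, i = 0 ∨ i = 1 ∨ i = 2 ∨ i = 3 := by decide
  apply hc 4 le_rfl
  refine ⟨![a,b,c,d], ?_, ?_⟩
  · have dab := eab.ne; have dbc := ebc.ne; have dcd := ecd.ne; have dda := eda.ne
    intro i j hij
    rcases key i with rfl|rfl|rfl|rfl <;> rcases key j with rfl|rfl|rfl|rfl <;>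
      first
        | rfl
        | exact absurd hij dab | exact absurd hij dab.symm
        | exact absurd hij dbc | exact absurd hij dbc.symm
        | exact absurd hij dcd | exact absurd hij dcd.symm
        | exact absurd hij dda.symm | exact absurd hij dda
        | exact absurd hij dac | exact absurd hij dac.symm
        | exact absurd hij dbd | exact absurd hij dbd.symm
  · intro i j
    rcases key i with rfl|rfl|rfl|rfl <;> rcases key j with rfl|rfl|rfl|rfl <;>
      first
        | exact iff_of_true eab (by decide) | exact iff_of_true eab.symm (by decide)
        | exact iff_of_true ebc (by decide) | exact iff_of_true ebc.symm (by decide)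
        | exact iff_of_true ecd (by decide) | exact iff_of_true ecd.symm (by decide)
        | exact iff_of_true eda (by decide) | exact iff_of_true eda.symm (by decide)
        | exact iff_of_false nac (by decide) | exact iff_of_false (fun h => nac h.symm) (by decide)
        | exact iff_of_false nbd (by decide) | exact iff_of_false (fun h => nbd h.symm) (by decide)
        | exact iff_of_false (G.irrefl) (by decide)

lemma noC5 {G : SimpleGraph V} (hc : Chordal G) (a b c d e : V)
    (eab : G.Adj a b) (ebc : G.Adj b c) (ecd : G.Adj c d) (ede : G.Adj d e) (eea : G.Adj e a)
    (nac : ¬ G.Adj a c) (nad : ¬ G.Adj a d) (nbd : ¬ G.Adj b d) (nbe : ¬ G.Adj b e)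
    (nce : ¬ G.Adj c e)
    (dac : a ≠ c) (dad : a ≠ d) (dbd : b ≠ d) (dbe : b ≠ e) (dce : c ≠ e) : False := by
  have key : ∀ i : ZMod 5, i = 0 ∨ i = 1 ∨ i = 2 ∨ i = 3 ∨ i = 4 := by decide
  apply hc 5 (by norm_num)
  refine ⟨![a,b,c,d,e], ?_, ?_⟩
  · have dab := eab.ne; have dbc := ebc.ne; have dcd := ecd.ne
    have dde := ede.ne; have dea := eea.ne
    intro i j hij
    rcases key i with rfl|rfl|rfl|rfl|rfl <;> rcases key j with rfl|rfl|rfl|rfl|rfl <;>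
      first
        | rfl
        | exact absurd hij dab | exact absurd hij dab.symm
        | exact absurd hij dbc | exact absurd hij dbc.symm
        | exact absurd hij dcd | exact absurd hij dcd.symm
        | exact absurd hij dde | exact absurd hij dde.symm
        | exact absurd hij dea.symm | exact absurd hij dea
        | exact absurd hij dac | exact absurd hij dac.symm
        | exact absurd hij dad | exact absurd hij dad.symm
        | exact absurd hij dbd | exact absurd hij dbd.symm
        | exact absurd hij dbe | exact absurd hij dbe.symm
        | exact absurd hij dce | exact absurd hij dce.symm
  · intro i j
    rcases key i with rfl|rfl|rfl|rfl|rfl <;> rcases key j with rfl|rfl|rfl|rfl|rfl <;>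
      first
        | exact iff_of_true eab (by decide) | exact iff_of_true eab.symm (by decide)
        | exact iff_of_true ebc (by decide) | exact iff_of_true ebc.symm (by decide)
        | exact iff_of_true ecd (by decide) | exact iff_of_true ecd.symm (by decide)
        | exact iff_of_true ede (by decide) | exact iff_of_true ede.symm (by decide)
        | exact iff_of_true eea (by decide) | exact iff_of_true eea.symm (by decide)
        | exact iff_of_false nac (by decide) | exact iff_of_false (fun h => nac h.symm) (by decide)
        | exact iff_of_false nad (by decide) | exact iff_of_false (fun h => nad h.symm) (by decide)
        | exact iff_of_false nbd (by decide) | exact iff_of_false (fun h => nbd h.symm) (by decide)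
        | exact iff_of_false nbe (by decide) | exact iff_of_false (fun h => nbe h.symm) (by decide)
        | exact iff_of_false nce (by decide) | exact iff_of_false (fun h => nce h.symm) (by decide)
        | exact iff_of_false (G.irrefl) (by decide)

lemma noC6 {G : SimpleGraph V} (hc : Chordal G) (a b c d e f : V)
    (eab : G.Adj a b) (ebc : G.Adj b c) (ecd : G.Adj c d) (ede : G.Adj d e)
    (eef : G.Adj e f) (efa : G.Adj f a)
    (nac : ¬ G.Adj a c) (nad : ¬ G.Adj a d) (nae : ¬ G.Adj a e)
    (nbd : ¬ G.Adj b d) (nbe : ¬ G.Adj b e) (nbf : ¬ G.Adj b f)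
    (nce : ¬ G.Adj c e) (ncf : ¬ G.Adj c f) (ndf : ¬ G.Adj d f)
    (dac : a ≠ c) (dad : a ≠ d) (dae : a ≠ e) (dbd : b ≠ d) (dbe : b ≠ e) (dbf : b ≠ f)
    (dce : c ≠ e) (dcf : c ≠ f) (ddf : d ≠ f) : False := by
  have key : ∀ i : ZMod 6, i = 0 ∨ i = 1 ∨ i = 2 ∨ i = 3 ∨ i = 4 ∨ i = 5 := by decide
  apply hc 6 (by norm_num)
  refine ⟨![a,b,c,d,e,f], ?_, ?_⟩
  · have dab := eab.ne; have dbc := ebc.ne; have dcd := ecd.ne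
    have dde := ede.ne; have def' := eef.ne; have dfa := efa.ne
    intro i j hij
    rcases key i with rfl|rfl|rfl|rfl|rfl|rfl <;> rcases key j with rfl|rfl|rfl|rfl|rfl|rfl <;>
      first
        | rfl
        | exact absurd hij dab | exact absurd hij dab.symm
        | exact absurd hij dbc | exact absurd hij dbc.symm
        | exact absurd hij dcd | exact absurd hij dcd.symm
        | exact absurd hij dde | exact absurd hij dde.symm
        | exact absurd hij def' | exact absurd hij def'.symm
        | exact absurd hij dfa.symm | exact absurd hij dfa
        | exact absurd hij dac | exact absurd hij dac.symm
        | exact absurd hij dad | exact absurd hij dad.symm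
        | exact absurd hij dae | exact absurd hij dae.symm
        | exact absurd hij dbd | exact absurd hij dbd.symm
        | exact absurd hij dbe | exact absurd hij dbe.symm
        | exact absurd hij dbf | exact absurd hij dbf.symm
        | exact absurd hij dce | exact absurd hij dce.symm
        | exact absurd hij dcf | exact absurd hij dcf.symm
        | exact absurd hij ddf | exact absurd hij ddf.symm
  · intro i j
    rcases key i with rfl|rfl|rfl|rfl|rfl|rfl <;> rcases key j with rfl|rfl|rfl|rfl|rfl|rfl <;>
      first
        | exact iff_of_true eab (by decide) | exact iff_of_true eab.symm (by decide)
        | exact iff_of_true ebc (by decide) | exact iff_of_true ebc.symm (by decide)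
        | exact iff_of_true ecd (by decide) | exact iff_of_true ecd.symm (by decide)
        | exact iff_of_true ede (by decide) | exact iff_of_true ede.symm (by decide)
        | exact iff_of_true eef (by decide) | exact iff_of_true eef.symm (by decide)
        | exact iff_of_true efa (by decide) | exact iff_of_true efa.symm (by decide)
        | exact iff_of_false nac (by decide) | exact iff_of_false (fun h => nac h.symm) (by decide)
        | exact iff_of_false nad (by decide) | exact iff_of_false (fun h => nad h.symm) (by decide)
        | exact iff_of_false nae (by decide) | exact iff_of_false (fun h => nae h.symm) (by decide)
        | exact iff_of_false nbd (by decide) | exact iff_of_false (fun h => nbd h.symm) (by decide)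
        | exact iff_of_false nbe (by decide) | exact iff_of_false (fun h => nbe h.symm) (by decide)
        | exact iff_of_false nbf (by decide) | exact iff_of_false (fun h => nbf h.symm) (by decide)
        | exact iff_of_false nce (by decide) | exact iff_of_false (fun h => nce h.symm) (by decide)
        | exact iff_of_false ncf (by decide) | exact iff_of_false (fun h => ncf h.symm) (by decide)
        | exact iff_of_false ndf (by decide) | exact iff_of_false (fun h => ndf h.symm) (by decide)
        | exact iff_of_false (G.irrefl) (by decide)

/-- For adjacent irredundant `u, v` there are `u' ∈ N[u] \ N[v]`,
`u'' ∈ N[u'] \ N[u]`, `v' ∈ N[v] \ N[u]`, `v'' ∈ N[v'] \ N[v]`; if moreover `G` is chordal,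
then `u'', u', u, v, v', v''` induce a path on six vertices in this order. -/
theorem stmt_3 [Fintype V] (G : SimpleGraph V) (IR : Set V)
    (hIR : IsIrredundantSet G IR) (u v : V) (hu : u ∈ IR) (hv : v ∈ IR)
    (huv : G.Adj u v) :
    ∃ u' ∈ cnbr G u \ cnbr G v, ∃ u'' ∈ cnbr G u' \ cnbr G u,
      ∃ v' ∈ cnbr G v \ cnbr G u, ∃ v'' ∈ cnbr G v' \ cnbr G v,
        (Chordal G →
          Function.Injective ![u'', u', u, v, v', v''] ∧
          ∀ i j : Fin 6,
            G.Adj (![u'', u', u, v, v', v''] i) (![u'', u', u, v, v', v''] j) ↔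
              (i.val + 1 = j.val ∨ j.val + 1 = i.val)) := by
  obtain ⟨h1, h2, h3⟩ := hIR
  have vmu : v ∈ cnbr G u := mem_cnbr.mpr (Or.inr huv)
  have umv : u ∈ cnbr G v := mem_cnbr.mpr (Or.inr huv.symm)
  obtain ⟨u', hu'u, hu'v⟩ := exists_escape h2 hv u (h3 u hu v hv huv.ne)
  obtain ⟨v', hv'v, hv'u⟩ := exists_escape h2 hu v (h3 v hv u hu huv.ne')
  have hneu : cnbr G u' ≠ cnbr G u := by
    intro h
    have hvm : v ∈ cnbr G u' := by rw [h]; exact vmu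
    rcases mem_cnbr.mp hvm with h' | h'
    · exact hu'v (mem_cnbr.mpr (Or.inl h'.symm))
    · exact hu'v (mem_cnbr.mpr (Or.inr h'.symm))
  have hnev : cnbr G v' ≠ cnbr G v := by
    intro h
    have hum : u ∈ cnbr G v' := by rw [h]; exact umv
    rcases mem_cnbr.mp hum with h' | h'
    · exact hv'u (mem_cnbr.mpr (Or.inl h'.symm))
    · exact hv'u (mem_cnbr.mpr (Or.inr h'.symm))
  obtain ⟨u'', hu''u', hu''u⟩ := exists_escape h2 hu u' hneu
  obtain ⟨v'', hv''v', hv''v⟩ := exists_escape h2 hv v' hnev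
  refine ⟨u', ⟨hu'u, hu'v⟩, u'', ⟨hu''u', hu''u⟩, v', ⟨hv'v, hv'u⟩, v'', ⟨hv''v', hv''v⟩, ?_⟩
  intro hc
  -- basic distinctness and edges
  have d12 : u' ≠ u := fun h => hu'v (by rw [h]; exact umv)
  have e12 : G.Adj u' u := by
    rcases mem_cnbr.mp hu'u with h | h
    · exact absurd h d12
    · exact h.symm
  have d34 : v ≠ v' := fun h => hv'u (by rw [← h]; exact vmu)
  have e34 : G.Adj v v' := by
    rcases mem_cnbr.mp hv'v with h | h
    · exact absurd h d34.symm
    · exact h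
  have d01 : u'' ≠ u' := fun h => hu''u (by rw [h]; exact hu'u)
  have e01 : G.Adj u'' u' := by
    rcases mem_cnbr.mp hu''u' with h | h
    · exact absurd h d01
    · exact h.symm
  have d45 : v' ≠ v'' := fun h => hv''v (by rw [← h]; exact hv'v)
  have e45 : G.Adj v' v'' := by
    rcases mem_cnbr.mp hv''v' with h | h
    · exact absurd h d45.symm
    · exact h
  have d02 : u'' ≠ u := fun h => hu''u (by rw [h]; exact mem_cnbr.mpr (Or.inl rfl))
  have n02 : ¬ G.Adj u'' u := fun h => hu''u (mem_cnbr.mpr (Or.inr h.symm))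
  have d35 : v ≠ v'' := fun h => hv''v (by rw [← h]; exact mem_cnbr.mpr (Or.inl rfl))
  have n35 : ¬ G.Adj v v'' := fun h => hv''v (mem_cnbr.mpr (Or.inr h))
  have d13 : u' ≠ v := fun h => hu'v (by rw [h]; exact mem_cnbr.mpr (Or.inl rfl))
  have n13 : ¬ G.Adj u' v := fun h => hu'v (mem_cnbr.mpr (Or.inr h.symm))
  have d24 : u ≠ v' := fun h => hv'u (by rw [← h]; exact mem_cnbr.mpr (Or.inl rfl))
  have n24 : ¬ G.Adj u v' := fun h => hv'u (mem_cnbr.mpr (Or.inr h))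
  have d23 : u ≠ v := huv.ne
  have d03 : u'' ≠ v := fun h => hu''u (by rw [h]; exact vmu)
  have d25 : u ≠ v'' := fun h => hv''v (by rw [← h]; exact umv)
  have d14 : u' ≠ v' := fun h => hv'u (by rw [← h]; exact hu'u)
  -- chordality: no chords
  have n14 : ¬ G.Adj u' v' := fun h =>
    noC4 hc u u' v' v e12.symm h e34.symm huv.symm n24 n13 d24 d13
  have n03 : ¬ G.Adj u'' v := fun h =>
    noC4 hc u'' u' u v e01 e12 huv h.symm n02 n13 d02 d13
  have n25 : ¬ G.Adj u v'' := fun h =>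
    noC4 hc v'' v' v u e45.symm e34.symm huv.symm h (fun h' => n35 h'.symm) (fun h' => n24 h'.symm) d35.symm d24.symm
  have d04 : u'' ≠ v' := fun h => n03 (by rw [h]; exact e34.symm)
  have d15 : u' ≠ v'' := fun h => n25 (by rw [← h]; exact e12.symm)
  have n04 : ¬ G.Adj u'' v' := fun h =>
    noC5 hc u'' u' u v v' e01 e12 huv e34 h.symm n02 n03 n13 n14 n24 d02 d03 d13 d14 d24
  have n15 : ¬ G.Adj u' v'' := fun h =>
    noC5 hc v'' v' v u u' e45.symm e34.symm huv.symm e12.symm h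
      (fun h' => n35 h'.symm) (fun h' => n25 h'.symm) (fun h' => n24 h'.symm)
      (fun h' => n14 h'.symm) (fun h' => n13 h'.symm)
      d35.symm d25.symm d24.symm d14.symm d13.symm
  have d05 : u'' ≠ v'' := fun h => n04 (by rw [h]; exact e45.symm)
  have n05 : ¬ G.Adj u'' v'' := fun h =>
    noC6 hc u'' u' u v v' v'' e01 e12 huv e34 e45 h.symm
      n02 n03 n04 n13 n14 n15 n24 n25 n35
      d02 d03 d04 d13 d14 d15 d24 d25 d35
  have key6 : ∀ i : Fin 6, i = 0 ∨ i = 1 ∨ i = 2 ∨ i = 3 ∨ i = 4 ∨ i = 5 := by decide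
  constructor
  · intro i j hij
    rcases key6 i with rfl|rfl|rfl|rfl|rfl|rfl <;> rcases key6 j with rfl|rfl|rfl|rfl|rfl|rfl <;>
      first
        | rfl
        | exact absurd hij d01 | exact absurd hij d01.symm
        | exact absurd hij d02 | exact absurd hij d02.symm
        | exact absurd hij d03 | exact absurd hij d03.symm
        | exact absurd hij d04 | exact absurd hij d04.symm
        | exact absurd hij d05 | exact absurd hij d05.symm
        | exact absurd hij d12 | exact absurd hij d12.symm
        | exact absurd hij d13 | exact absurd hij d13.symm
        | exact absurd hij d14 | exact absurd hij d14.symm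
        | exact absurd hij d15 | exact absurd hij d15.symm
        | exact absurd hij d23 | exact absurd hij d23.symm
        | exact absurd hij d24 | exact absurd hij d24.symm
        | exact absurd hij d25 | exact absurd hij d25.symm
        | exact absurd hij d34 | exact absurd hij d34.symm
        | exact absurd hij d35 | exact absurd hij d35.symm
        | exact absurd hij d45 | exact absurd hij d45.symm
  · intro i j
    rcases key6 i with rfl|rfl|rfl|rfl|rfl|rfl <;> rcases key6 j with rfl|rfl|rfl|rfl|rfl|rfl <;>
      first
        | exact iff_of_true e01 (by decide) | exact iff_of_true e01.symm (by decide)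
        | exact iff_of_true e12 (by decide) | exact iff_of_true e12.symm (by decide)
        | exact iff_of_true huv (by decide) | exact iff_of_true huv.symm (by decide)
        | exact iff_of_true e34 (by decide) | exact iff_of_true e34.symm (by decide)
        | exact iff_of_true e45 (by decide) | exact iff_of_true e45.symm (by decide)
        | exact iff_of_false n02 (by decide) | exact iff_of_false (fun h => n02 h.symm) (by decide)
        | exact iff_of_false n03 (by decide) | exact iff_of_false (fun h => n03 h.symm) (by decide)
        | exact iff_of_false n04 (by decide) | exact iff_of_false (fun h => n04 h.symm) (by decide)
        | exact iff_of_false n05 (by decide) | exact iff_of_false (fun h => n05 h.symm) (by decide)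
        | exact iff_of_false n13 (by decide) | exact iff_of_false (fun h => n13 h.symm) (by decide)
        | exact iff_of_false n14 (by decide) | exact iff_of_false (fun h => n14 h.symm) (by decide)
        | exact iff_of_false n15 (by decide) | exact iff_of_false (fun h => n15 h.symm) (by decide)
        | exact iff_of_false n24 (by decide) | exact iff_of_false (fun h => n24 h.symm) (by decide)
        | exact iff_of_false n25 (by decide) | exact iff_of_false (fun h => n25 h.symm) (by decide)
        | exact iff_of_false n35 (by decide) | exact iff_of_false (fun h => n35 h.symm) (by decide)
        | exact iff_of_false (G.irrefl) (by decide)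
end

section
/- Let G be a finite simple chordal graph that is P_8-free, and let IR be an irredundant set of G. Then D_RN(G) is an accessible set system: for every nonempty A ∈ D_RN(G) there exists a ∈ A such that the set A \ {a} belongs to D_RN(G). -/
variable {V : Type*}

private lemma zmodCases4 (i : ZMod 4) : i = 0 ∨ i = 1 ∨ i = 2 ∨ i = 3 := by revert i; decide
private lemma noC4_s5 {V : Type*} {G : SimpleGraph V} (hch : Chordal G) {v0 v1 v2 v3 : V}
    (e0 : G.Adj v0 v1) (e1 : G.Adj v1 v2) (e2 : G.Adj v2 v3) (e3 : G.Adj v3 v0) (n02 : ¬ G.Adj v0 v2) (d02 : v0 ≠ v2) (n13 : ¬ G.Adj v1 v3) (d13 : v1 ≠ v3) : False := by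
  refine hch 4 (by norm_num) ⟨![v0, v1, v2, v3], ?_, ?_⟩
  · intro i j hij
    rcases zmodCases4 i with rfl|rfl|rfl|rfl <;> rcases zmodCases4 j with rfl|rfl|rfl|rfl
    · rfl
    · exact absurd hij (e0.ne)
    · exact absurd hij d02
    · exact absurd hij (e3.ne')
    · exact absurd hij (e0.ne')
    · rfl
    · exact absurd hij (e1.ne)
    · exact absurd hij d13
    · exact absurd hij (d02.symm)
    · exact absurd hij (e1.ne')
    · rfl
    · exact absurd hij (e2.ne)
    · exact absurd hij (e3.ne)
    · exact absurd hij (d13.symm)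
    · exact absurd hij (e2.ne')
    · rfl
  · intro i j
    rcases zmodCases4 i with rfl|rfl|rfl|rfl <;> rcases zmodCases4 j with rfl|rfl|rfl|rfl
    · exact iff_of_false (G.irrefl) (by decide)
    · exact iff_of_true e0 (by decide)
    · exact iff_of_false (fun h => n02 h) (by decide)
    · exact iff_of_true (e3.symm) (by decide)
    · exact iff_of_true (e0.symm) (by decide)
    · exact iff_of_false (G.irrefl) (by decide)
    · exact iff_of_true e1 (by decide)
    · exact iff_of_false (fun h => n13 h) (by decide)
    · exact iff_of_false (fun h => n02 h.symm) (by decide)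
    · exact iff_of_true (e1.symm) (by decide)
    · exact iff_of_false (G.irrefl) (by decide)
    · exact iff_of_true e2 (by decide)
    · exact iff_of_true e3 (by decide)
    · exact iff_of_false (fun h => n13 h.symm) (by decide)
    · exact iff_of_true (e2.symm) (by decide)
    · exact iff_of_false (G.irrefl) (by decide)

private lemma zmodCases5 (i : ZMod 5) : i = 0 ∨ i = 1 ∨ i = 2 ∨ i = 3 ∨ i = 4 := by revert i; decide
private lemma noC5_s5 {V : Type*} {G : SimpleGraph V} (hch : Chordal G) {v0 v1 v2 v3 v4 : V}
    (e0 : G.Adj v0 v1) (e1 : G.Adj v1 v2) (e2 : G.Adj v2 v3) (e3 : G.Adj v3 v4) (e4 : G.Adj v4 v0) (n02 : ¬ G.Adj v0 v2) (d02 : v0 ≠ v2) (n03 : ¬ G.Adj v0 v3) (d03 : v0 ≠ v3) (n13 : ¬ G.Adj v1 v3) (d13 : v1 ≠ v3) (n14 : ¬ G.Adj v1 v4) (d14 : v1 ≠ v4) (n24 : ¬ G.Adj v2 v4) (d24 : v2 ≠ v4) : False := by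
  refine hch 5 (by norm_num) ⟨![v0, v1, v2, v3, v4], ?_, ?_⟩
  · intro i j hij
    rcases zmodCases5 i with rfl|rfl|rfl|rfl|rfl <;> rcases zmodCases5 j with rfl|rfl|rfl|rfl|rfl
    · rfl
    · exact absurd hij (e0.ne)
    · exact absurd hij d02
    · exact absurd hij d03
    · exact absurd hij (e4.ne')
    · exact absurd hij (e0.ne')
    · rfl
    · exact absurd hij (e1.ne)
    · exact absurd hij d13
    · exact absurd hij d14
    · exact absurd hij (d02.symm)
    · exact absurd hij (e1.ne')
    · rfl
    · exact absurd hij (e2.ne)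
    · exact absurd hij d24
    · exact absurd hij (d03.symm)
    · exact absurd hij (d13.symm)
    · exact absurd hij (e2.ne')
    · rfl
    · exact absurd hij (e3.ne)
    · exact absurd hij (e4.ne)
    · exact absurd hij (d14.symm)
    · exact absurd hij (d24.symm)
    · exact absurd hij (e3.ne')
    · rfl
  · intro i j
    rcases zmodCases5 i with rfl|rfl|rfl|rfl|rfl <;> rcases zmodCases5 j with rfl|rfl|rfl|rfl|rfl
    · exact iff_of_false (G.irrefl) (by decide)
    · exact iff_of_true e0 (by decide)
    · exact iff_of_false (fun h => n02 h) (by decide)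
    · exact iff_of_false (fun h => n03 h) (by decide)
    · exact iff_of_true (e4.symm) (by decide)
    · exact iff_of_true (e0.symm) (by decide)
    · exact iff_of_false (G.irrefl) (by decide)
    · exact iff_of_true e1 (by decide)
    · exact iff_of_false (fun h => n13 h) (by decide)
    · exact iff_of_false (fun h => n14 h) (by decide)
    · exact iff_of_false (fun h => n02 h.symm) (by decide)
    · exact iff_of_true (e1.symm) (by decide)
    · exact iff_of_false (G.irrefl) (by decide)
    · exact iff_of_true e2 (by decide)
    · exact iff_of_false (fun h => n24 h) (by decide)
    · exact iff_of_false (fun h => n03 h.symm) (by decide)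
    · exact iff_of_false (fun h => n13 h.symm) (by decide)
    · exact iff_of_true (e2.symm) (by decide)
    · exact iff_of_false (G.irrefl) (by decide)
    · exact iff_of_true e3 (by decide)
    · exact iff_of_true e4 (by decide)
    · exact iff_of_false (fun h => n14 h.symm) (by decide)
    · exact iff_of_false (fun h => n24 h.symm) (by decide)
    · exact iff_of_true (e3.symm) (by decide)
    · exact iff_of_false (G.irrefl) (by decide)

private lemma zmodCases6 (i : ZMod 6) : i = 0 ∨ i = 1 ∨ i = 2 ∨ i = 3 ∨ i = 4 ∨ i = 5 := by revert i; decide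
private lemma noC6_s5 {V : Type*} {G : SimpleGraph V} (hch : Chordal G) {v0 v1 v2 v3 v4 v5 : V}
    (e0 : G.Adj v0 v1) (e1 : G.Adj v1 v2) (e2 : G.Adj v2 v3) (e3 : G.Adj v3 v4) (e4 : G.Adj v4 v5) (e5 : G.Adj v5 v0) (n02 : ¬ G.Adj v0 v2) (d02 : v0 ≠ v2) (n03 : ¬ G.Adj v0 v3) (d03 : v0 ≠ v3) (n04 : ¬ G.Adj v0 v4) (d04 : v0 ≠ v4) (n13 : ¬ G.Adj v1 v3) (d13 : v1 ≠ v3) (n14 : ¬ G.Adj v1 v4) (d14 : v1 ≠ v4) (n15 : ¬ G.Adj v1 v5) (d15 : v1 ≠ v5) (n24 : ¬ G.Adj v2 v4) (d24 : v2 ≠ v4) (n25 : ¬ G.Adj v2 v5) (d25 : v2 ≠ v5) (n35 : ¬ G.Adj v3 v5) (d35 : v3 ≠ v5) : False := by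
  refine hch 6 (by norm_num) ⟨![v0, v1, v2, v3, v4, v5], ?_, ?_⟩
  · intro i j hij
    rcases zmodCases6 i with rfl|rfl|rfl|rfl|rfl|rfl <;> rcases zmodCases6 j with rfl|rfl|rfl|rfl|rfl|rfl
    · rfl
    · exact absurd hij (e0.ne)
    · exact absurd hij d02
    · exact absurd hij d03
    · exact absurd hij d04
    · exact absurd hij (e5.ne')
    · exact absurd hij (e0.ne')
    · rfl
    · exact absurd hij (e1.ne)
    · exact absurd hij d13
    · exact absurd hij d14
    · exact absurd hij d15
    · exact absurd hij (d02.symm)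
    · exact absurd hij (e1.ne')
    · rfl
    · exact absurd hij (e2.ne)
    · exact absurd hij d24
    · exact absurd hij d25
    · exact absurd hij (d03.symm)
    · exact absurd hij (d13.symm)
    · exact absurd hij (e2.ne')
    · rfl
    · exact absurd hij (e3.ne)
    · exact absurd hij d35
    · exact absurd hij (d04.symm)
    · exact absurd hij (d14.symm)
    · exact absurd hij (d24.symm)
    · exact absurd hij (e3.ne')
    · rfl
    · exact absurd hij (e4.ne)
    · exact absurd hij (e5.ne)
    · exact absurd hij (d15.symm)
    · exact absurd hij (d25.symm)
    · exact absurd hij (d35.symm)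
    · exact absurd hij (e4.ne')
    · rfl
  · intro i j
    rcases zmodCases6 i with rfl|rfl|rfl|rfl|rfl|rfl <;> rcases zmodCases6 j with rfl|rfl|rfl|rfl|rfl|rfl
    · exact iff_of_false (G.irrefl) (by decide)
    · exact iff_of_true e0 (by decide)
    · exact iff_of_false (fun h => n02 h) (by decide)
    · exact iff_of_false (fun h => n03 h) (by decide)
    · exact iff_of_false (fun h => n04 h) (by decide)
    · exact iff_of_true (e5.symm) (by decide)
    · exact iff_of_true (e0.symm) (by decide)
    · exact iff_of_false (G.irrefl) (by decide)
    · exact iff_of_true e1 (by decide)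
    · exact iff_of_false (fun h => n13 h) (by decide)
    · exact iff_of_false (fun h => n14 h) (by decide)
    · exact iff_of_false (fun h => n15 h) (by decide)
    · exact iff_of_false (fun h => n02 h.symm) (by decide)
    · exact iff_of_true (e1.symm) (by decide)
    · exact iff_of_false (G.irrefl) (by decide)
    · exact iff_of_true e2 (by decide)
    · exact iff_of_false (fun h => n24 h) (by decide)
    · exact iff_of_false (fun h => n25 h) (by decide)
    · exact iff_of_false (fun h => n03 h.symm) (by decide)
    · exact iff_of_false (fun h => n13 h.symm) (by decide)
    · exact iff_of_true (e2.symm) (by decide)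
    · exact iff_of_false (G.irrefl) (by decide)
    · exact iff_of_true e3 (by decide)
    · exact iff_of_false (fun h => n35 h) (by decide)
    · exact iff_of_false (fun h => n04 h.symm) (by decide)
    · exact iff_of_false (fun h => n14 h.symm) (by decide)
    · exact iff_of_false (fun h => n24 h.symm) (by decide)
    · exact iff_of_true (e3.symm) (by decide)
    · exact iff_of_false (G.irrefl) (by decide)
    · exact iff_of_true e4 (by decide)
    · exact iff_of_true e5 (by decide)
    · exact iff_of_false (fun h => n15 h.symm) (by decide)
    · exact iff_of_false (fun h => n25 h.symm) (by decide)
    · exact iff_of_false (fun h => n35 h.symm) (by decide)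
    · exact iff_of_true (e4.symm) (by decide)
    · exact iff_of_false (G.irrefl) (by decide)

private lemma zmodCases8 (i : ZMod 8) : i = 0 ∨ i = 1 ∨ i = 2 ∨ i = 3 ∨ i = 4 ∨ i = 5 ∨ i = 6 ∨ i = 7 := by revert i; decide
private lemma noC8 {V : Type*} {G : SimpleGraph V} (hch : Chordal G) {v0 v1 v2 v3 v4 v5 v6 v7 : V}
    (e0 : G.Adj v0 v1) (e1 : G.Adj v1 v2) (e2 : G.Adj v2 v3) (e3 : G.Adj v3 v4) (e4 : G.Adj v4 v5) (e5 : G.Adj v5 v6) (e6 : G.Adj v6 v7) (e7 : G.Adj v7 v0) (n02 : ¬ G.Adj v0 v2) (d02 : v0 ≠ v2) (n03 : ¬ G.Adj v0 v3) (d03 : v0 ≠ v3) (n04 : ¬ G.Adj v0 v4) (d04 : v0 ≠ v4) (n05 : ¬ G.Adj v0 v5) (d05 : v0 ≠ v5) (n06 : ¬ G.Adj v0 v6) (d06 : v0 ≠ v6) (n13 : ¬ G.Adj v1 v3) (d13 : v1 ≠ v3) (n14 : ¬ G.Adj v1 v4) (d14 : v1 ≠ v4) (n15 : ¬ G.Adj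 v1 v5) (d15 : v1 ≠ v5) (n16 : ¬ G.Adj v1 v6) (d16 : v1 ≠ v6) (n17 : ¬ G.Adj v1 v7) (d17 : v1 ≠ v7) (n24 : ¬ G.Adj v2 v4) (d24 : v2 ≠ v4) (n25 : ¬ G.Adj v2 v5) (d25 : v2 ≠ v5) (n26 : ¬ G.Adj v2 v6) (d26 : v2 ≠ v6) (n27 : ¬ G.Adj v2 v7) (d27 : v2 ≠ v7) (n35 : ¬ G.Adj v3 v5) (d35 : v3 ≠ v5) (n36 : ¬ G.Adj v3 v6) (d36 : v3 ≠ v6) (n37 : ¬ G.Adj v3 v7) (d37 : v3 ≠ v7) (n46 : ¬ G.Adj v4 v6) (d46 : v4 ≠ v6) (n47 : ¬ G.Adj v4 v7) (d47 : v4 ≠ v7) (n57 : ¬ G.Adj v5 v7) (d57 : v5 ≠ v7) : False := by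
  refine hch 8 (by norm_num) ⟨![v0, v1, v2, v3, v4, v5, v6, v7], ?_, ?_⟩
  · intro i j hij
    rcases zmodCases8 i with rfl|rfl|rfl|rfl|rfl|rfl|rfl|rfl <;> rcases zmodCases8 j with rfl|rfl|rfl|rfl|rfl|rfl|rfl|rfl
    · rfl
    · exact absurd hij (e0.ne)
    · exact absurd hij d02
    · exact absurd hij d03
    · exact absurd hij d04
    · exact absurd hij d05
    · exact absurd hij d06
    · exact absurd hij (e7.ne')
    · exact absurd hij (e0.ne')
    · rfl
    · exact absurd hij (e1.ne)
    · exact absurd hij d13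
    · exact absurd hij d14
    · exact absurd hij d15
    · exact absurd hij d16
    · exact absurd hij d17
    · exact absurd hij (d02.symm)
    · exact absurd hij (e1.ne')
    · rfl
    · exact absurd hij (e2.ne)
    · exact absurd hij d24
    · exact absurd hij d25
    · exact absurd hij d26
    · exact absurd hij d27
    · exact absurd hij (d03.symm)
    · exact absurd hij (d13.symm)
    · exact absurd hij (e2.ne')
    · rfl
    · exact absurd hij (e3.ne)
    · exact absurd hij d35
    · exact absurd hij d36
    · exact absurd hij d37
    · exact absurd hij (d04.symm)
    · exact absurd hij (d14.symm)
    · exact absurd hij (d24.symm)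
    · exact absurd hij (e3.ne')
    · rfl
    · exact absurd hij (e4.ne)
    · exact absurd hij d46
    · exact absurd hij d47
    · exact absurd hij (d05.symm)
    · exact absurd hij (d15.symm)
    · exact absurd hij (d25.symm)
    · exact absurd hij (d35.symm)
    · exact absurd hij (e4.ne')
    · rfl
    · exact absurd hij (e5.ne)
    · exact absurd hij d57
    · exact absurd hij (d06.symm)
    · exact absurd hij (d16.symm)
    · exact absurd hij (d26.symm)
    · exact absurd hij (d36.symm)
    · exact absurd hij (d46.symm)
    · exact absurd hij (e5.ne')
    · rfl
    · exact absurd hij (e6.ne)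
    · exact absurd hij (e7.ne)
    · exact absurd hij (d17.symm)
    · exact absurd hij (d27.symm)
    · exact absurd hij (d37.symm)
    · exact absurd hij (d47.symm)
    · exact absurd hij (d57.symm)
    · exact absurd hij (e6.ne')
    · rfl
  · intro i j
    rcases zmodCases8 i with rfl|rfl|rfl|rfl|rfl|rfl|rfl|rfl <;> rcases zmodCases8 j with rfl|rfl|rfl|rfl|rfl|rfl|rfl|rfl
    · exact iff_of_false (G.irrefl) (by decide)
    · exact iff_of_true e0 (by decide)
    · exact iff_of_false (fun h => n02 h) (by decide)
    · exact iff_of_false (fun h => n03 h) (by decide)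
    · exact iff_of_false (fun h => n04 h) (by decide)
    · exact iff_of_false (fun h => n05 h) (by decide)
    · exact iff_of_false (fun h => n06 h) (by decide)
    · exact iff_of_true (e7.symm) (by decide)
    · exact iff_of_true (e0.symm) (by decide)
    · exact iff_of_false (G.irrefl) (by decide)
    · exact iff_of_true e1 (by decide)
    · exact iff_of_false (fun h => n13 h) (by decide)
    · exact iff_of_false (fun h => n14 h) (by decide)
    · exact iff_of_false (fun h => n15 h) (by decide)
    · exact iff_of_false (fun h => n16 h) (by decide)
    · exact iff_of_false (fun h => n17 h) (by decide)
    · exact iff_of_false (fun h => n02 h.symm) (by decide)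
    · exact iff_of_true (e1.symm) (by decide)
    · exact iff_of_false (G.irrefl) (by decide)
    · exact iff_of_true e2 (by decide)
    · exact iff_of_false (fun h => n24 h) (by decide)
    · exact iff_of_false (fun h => n25 h) (by decide)
    · exact iff_of_false (fun h => n26 h) (by decide)
    · exact iff_of_false (fun h => n27 h) (by decide)
    · exact iff_of_false (fun h => n03 h.symm) (by decide)
    · exact iff_of_false (fun h => n13 h.symm) (by decide)
    · exact iff_of_true (e2.symm) (by decide)
    · exact iff_of_false (G.irrefl) (by decide)
    · exact iff_of_true e3 (by decide)
    · exact iff_of_false (fun h => n35 h) (by decide)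
    · exact iff_of_false (fun h => n36 h) (by decide)
    · exact iff_of_false (fun h => n37 h) (by decide)
    · exact iff_of_false (fun h => n04 h.symm) (by decide)
    · exact iff_of_false (fun h => n14 h.symm) (by decide)
    · exact iff_of_false (fun h => n24 h.symm) (by decide)
    · exact iff_of_true (e3.symm) (by decide)
    · exact iff_of_false (G.irrefl) (by decide)
    · exact iff_of_true e4 (by decide)
    · exact iff_of_false (fun h => n46 h) (by decide)
    · exact iff_of_false (fun h => n47 h) (by decide)
    · exact iff_of_false (fun h => n05 h.symm) (by decide)
    · exact iff_of_false (fun h => n15 h.symm) (by decide)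
    · exact iff_of_false (fun h => n25 h.symm) (by decide)
    · exact iff_of_false (fun h => n35 h.symm) (by decide)
    · exact iff_of_true (e4.symm) (by decide)
    · exact iff_of_false (G.irrefl) (by decide)
    · exact iff_of_true e5 (by decide)
    · exact iff_of_false (fun h => n57 h) (by decide)
    · exact iff_of_false (fun h => n06 h.symm) (by decide)
    · exact iff_of_false (fun h => n16 h.symm) (by decide)
    · exact iff_of_false (fun h => n26 h.symm) (by decide)
    · exact iff_of_false (fun h => n36 h.symm) (by decide)
    · exact iff_of_false (fun h => n46 h.symm) (by decide)
    · exact iff_of_true (e5.symm) (by decide)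
    · exact iff_of_false (G.irrefl) (by decide)
    · exact iff_of_true e6 (by decide)
    · exact iff_of_true e7 (by decide)
    · exact iff_of_false (fun h => n17 h.symm) (by decide)
    · exact iff_of_false (fun h => n27 h.symm) (by decide)
    · exact iff_of_false (fun h => n37 h.symm) (by decide)
    · exact iff_of_false (fun h => n47 h.symm) (by decide)
    · exact iff_of_false (fun h => n57 h.symm) (by decide)
    · exact iff_of_true (e6.symm) (by decide)
    · exact iff_of_false (G.irrefl) (by decide)

private lemma finCases8 (i : Fin 8) : i = 0 ∨ i = 1 ∨ i = 2 ∨ i = 3 ∨ i = 4 ∨ i = 5 ∨ i = 6 ∨ i = 7 := by revert i; decide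
private lemma noP8 {V : Type*} {G : SimpleGraph V} (hP : PkFree G 8) {v0 v1 v2 v3 v4 v5 v6 v7 : V}
    (e0 : G.Adj v0 v1) (e1 : G.Adj v1 v2) (e2 : G.Adj v2 v3) (e3 : G.Adj v3 v4) (e4 : G.Adj v4 v5) (e5 : G.Adj v5 v6) (e6 : G.Adj v6 v7) (n02 : ¬ G.Adj v0 v2) (d02 : v0 ≠ v2) (n03 : ¬ G.Adj v0 v3) (d03 : v0 ≠ v3) (n04 : ¬ G.Adj v0 v4) (d04 : v0 ≠ v4) (n05 : ¬ G.Adj v0 v5) (d05 : v0 ≠ v5) (n06 : ¬ G.Adj v0 v6) (d06 : v0 ≠ v6) (n07 : ¬ G.Adj v0 v7) (d07 : v0 ≠ v7) (n13 : ¬ G.Adj v1 v3) (d13 : v1 ≠ v3) (n14 : ¬ G.Adj v1 v4) (d14 : v1 ≠ v4) (n15 : ¬ G.Adj v1 v5) (d15 : v1 ≠ v5) (n16 : ¬ G.Adj v1 v6) (d16 : v1 ≠ v6) (n17 : ¬ G.Adj v1 v7) (d17 : v1 ≠ v7) (n24 : ¬ G.Adj v2 v4) (d24 : v2 ≠ v4)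 (n25 : ¬ G.Adj v2 v5) (d25 : v2 ≠ v5) (n26 : ¬ G.Adj v2 v6) (d26 : v2 ≠ v6) (n27 : ¬ G.Adj v2 v7) (d27 : v2 ≠ v7) (n35 : ¬ G.Adj v3 v5) (d35 : v3 ≠ v5) (n36 : ¬ G.Adj v3 v6) (d36 : v3 ≠ v6) (n37 : ¬ G.Adj v3 v7) (d37 : v3 ≠ v7) (n46 : ¬ G.Adj v4 v6) (d46 : v4 ≠ v6) (n47 : ¬ G.Adj v4 v7) (d47 : v4 ≠ v7) (n57 : ¬ G.Adj v5 v7) (d57 : v5 ≠ v7) : False := by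
  refine hP ⟨![v0, v1, v2, v3, v4, v5, v6, v7], ?_, ?_⟩
  · intro i j hij
    rcases finCases8 i with rfl|rfl|rfl|rfl|rfl|rfl|rfl|rfl <;> rcases finCases8 j with rfl|rfl|rfl|rfl|rfl|rfl|rfl|rfl
    · rfl
    · exact absurd hij (e0.ne)
    · exact absurd hij d02
    · exact absurd hij d03
    · exact absurd hij d04
    · exact absurd hij d05
    · exact absurd hij d06
    · exact absurd hij d07
    · exact absurd hij (e0.ne')
    · rfl
    · exact absurd hij (e1.ne)
    · exact absurd hij d13
    · exact absurd hij d14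
    · exact absurd hij d15
    · exact absurd hij d16
    · exact absurd hij d17
    · exact absurd hij (d02.symm)
    · exact absurd hij (e1.ne')
    · rfl
    · exact absurd hij (e2.ne)
    · exact absurd hij d24
    · exact absurd hij d25
    · exact absurd hij d26
    · exact absurd hij d27
    · exact absurd hij (d03.symm)
    · exact absurd hij (d13.symm)
    · exact absurd hij (e2.ne')
    · rfl
    · exact absurd hij (e3.ne)
    · exact absurd hij d35
    · exact absurd hij d36
    · exact absurd hij d37
    · exact absurd hij (d04.symm)
    · exact absurd hij (d14.symm)
    · exact absurd hij (d24.symm)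
    · exact absurd hij (e3.ne')
    · rfl
    · exact absurd hij (e4.ne)
    · exact absurd hij d46
    · exact absurd hij d47
    · exact absurd hij (d05.symm)
    · exact absurd hij (d15.symm)
    · exact absurd hij (d25.symm)
    · exact absurd hij (d35.symm)
    · exact absurd hij (e4.ne')
    · rfl
    · exact absurd hij (e5.ne)
    · exact absurd hij d57
    · exact absurd hij (d06.symm)
    · exact absurd hij (d16.symm)
    · exact absurd hij (d26.symm)
    · exact absurd hij (d36.symm)
    · exact absurd hij (d46.symm)
    · exact absurd hij (e5.ne')
    · rfl
    · exact absurd hij (e6.ne)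
    · exact absurd hij (d07.symm)
    · exact absurd hij (d17.symm)
    · exact absurd hij (d27.symm)
    · exact absurd hij (d37.symm)
    · exact absurd hij (d47.symm)
    · exact absurd hij (d57.symm)
    · exact absurd hij (e6.ne')
    · rfl
  · intro i j
    rcases finCases8 i with rfl|rfl|rfl|rfl|rfl|rfl|rfl|rfl <;> rcases finCases8 j with rfl|rfl|rfl|rfl|rfl|rfl|rfl|rfl
    · exact iff_of_false (G.irrefl) (by decide)
    · exact iff_of_true e0 (by decide)
    · exact iff_of_false (fun h => n02 h) (by decide)
    · exact iff_of_false (fun h => n03 h) (by decide)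
    · exact iff_of_false (fun h => n04 h) (by decide)
    · exact iff_of_false (fun h => n05 h) (by decide)
    · exact iff_of_false (fun h => n06 h) (by decide)
    · exact iff_of_false (fun h => n07 h) (by decide)
    · exact iff_of_true (e0.symm) (by decide)
    · exact iff_of_false (G.irrefl) (by decide)
    · exact iff_of_true e1 (by decide)
    · exact iff_of_false (fun h => n13 h) (by decide)
    · exact iff_of_false (fun h => n14 h) (by decide)
    · exact iff_of_false (fun h => n15 h) (by decide)
    · exact iff_of_false (fun h => n16 h) (by decide)
    · exact iff_of_false (fun h => n17 h) (by decide)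
    · exact iff_of_false (fun h => n02 h.symm) (by decide)
    · exact iff_of_true (e1.symm) (by decide)
    · exact iff_of_false (G.irrefl) (by decide)
    · exact iff_of_true e2 (by decide)
    · exact iff_of_false (fun h => n24 h) (by decide)
    · exact iff_of_false (fun h => n25 h) (by decide)
    · exact iff_of_false (fun h => n26 h) (by decide)
    · exact iff_of_false (fun h => n27 h) (by decide)
    · exact iff_of_false (fun h => n03 h.symm) (by decide)
    · exact iff_of_false (fun h => n13 h.symm) (by decide)
    · exact iff_of_true (e2.symm) (by decide)
    · exact iff_of_false (G.irrefl) (by decide)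
    · exact iff_of_true e3 (by decide)
    · exact iff_of_false (fun h => n35 h) (by decide)
    · exact iff_of_false (fun h => n36 h) (by decide)
    · exact iff_of_false (fun h => n37 h) (by decide)
    · exact iff_of_false (fun h => n04 h.symm) (by decide)
    · exact iff_of_false (fun h => n14 h.symm) (by decide)
    · exact iff_of_false (fun h => n24 h.symm) (by decide)
    · exact iff_of_true (e3.symm) (by decide)
    · exact iff_of_false (G.irrefl) (by decide)
    · exact iff_of_true e4 (by decide)
    · exact iff_of_false (fun h => n46 h) (by decide)
    · exact iff_of_false (fun h => n47 h) (by decide)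
    · exact iff_of_false (fun h => n05 h.symm) (by decide)
    · exact iff_of_false (fun h => n15 h.symm) (by decide)
    · exact iff_of_false (fun h => n25 h.symm) (by decide)
    · exact iff_of_false (fun h => n35 h.symm) (by decide)
    · exact iff_of_true (e4.symm) (by decide)
    · exact iff_of_false (G.irrefl) (by decide)
    · exact iff_of_true e5 (by decide)
    · exact iff_of_false (fun h => n57 h) (by decide)
    · exact iff_of_false (fun h => n06 h.symm) (by decide)
    · exact iff_of_false (fun h => n16 h.symm) (by decide)
    · exact iff_of_false (fun h => n26 h.symm) (by decide)
    · exact iff_of_false (fun h => n36 h.symm) (by decide)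
    · exact iff_of_false (fun h => n46 h.symm) (by decide)
    · exact iff_of_true (e5.symm) (by decide)
    · exact iff_of_false (G.irrefl) (by decide)
    · exact iff_of_true e6 (by decide)
    · exact iff_of_false (fun h => n07 h.symm) (by decide)
    · exact iff_of_false (fun h => n17 h.symm) (by decide)
    · exact iff_of_false (fun h => n27 h.symm) (by decide)
    · exact iff_of_false (fun h => n37 h.symm) (by decide)
    · exact iff_of_false (fun h => n47 h.symm) (by decide)
    · exact iff_of_false (fun h => n57 h.symm) (by decide)
    · exact iff_of_true (e6.symm) (by decide)
    · exact iff_of_false (G.irrefl) (by decide)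

section Helpers

variable {V : Type*} {G : SimpleGraph V}

private lemma mem_cnbr_iff {x u : V} : u ∈ cnbr G x ↔ u = x ∨ G.Adj x u := by
  simp [cnbr]

private lemma self_mem_cnbr (G : SimpleGraph V) (x : V) : x ∈ cnbr G x :=
  mem_cnbr_iff.mpr (Or.inl rfl)

private lemma mem_cnbr_symm {x u : V} (h : u ∈ cnbr G x) : x ∈ cnbr G u := by
  rcases mem_cnbr_iff.mp h with rfl | h
  · exact self_mem_cnbr G u
  · exact mem_cnbr_iff.mpr (Or.inr h.symm)

private lemma mem_cnbr_of_adj {x u : V} (h : G.Adj x u) : u ∈ cnbr G x :=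
  mem_cnbr_iff.mpr (Or.inr h)

private lemma not_adj_of_notMem {x u : V} (h : u ∉ cnbr G x) : ¬ G.Adj x u :=
  fun ha => h (mem_cnbr_of_adj ha)

private lemma ne_of_notMem {x u : V} (h : u ∉ cnbr G x) : u ≠ x :=
  fun he => h (he ▸ self_mem_cnbr G x)

private lemma adj_of_mem_of_ne {x u : V} (h : u ∈ cnbr G x) (hne : u ≠ x) : G.Adj x u := by
  rcases mem_cnbr_iff.mp h with he | ha
  · exact absurd he hne
  · exact ha

private lemma mem_cnbrSet_iff {S : Set V} {u : V} :
    u ∈ cnbrSet G S ↔ ∃ x ∈ S, u ∈ cnbr G x := by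
  simp [cnbrSet]

-- flag facts
private lemma flag_tgt_mem {D : Set V} {x t : V} (h : cnbr G x ∩ D = {t}) : t ∈ cnbr G x :=
  (h ▸ (rfl : t ∈ ({t} : Set V)) : t ∈ cnbr G x ∩ D).1

private lemma flag_notMem {D : Set V} {x t y : V} (h : cnbr G x ∩ D = {t}) (hy : y ∈ D)
    (hne : y ≠ t) : y ∉ cnbr G x :=
  fun hmem => hne (by have : y ∈ cnbr G x ∩ D := ⟨hmem, hy⟩; rwa [h] at this)

private lemma flag_ne {D : Set V} {x y s t : V} (hx : cnbr G x ∩ D = {s})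
    (hy : cnbr G y ∩ D = {t}) (hst : s ≠ t) : x ≠ y := by
  rintro rfl
  rw [hx] at hy
  exact hst (by rw [Set.singleton_eq_singleton_iff] at hy; exact hy)

private lemma flag_not_in_D {D IR : Set V} {x t : V} (h : cnbr G x ∩ D = {t}) (hxIR : x ∈ IR)
    (htIR : t ∉ IR) : x ∉ D := by
  intro hxD
  have : x ∈ cnbr G x ∩ D := ⟨self_mem_cnbr G x, hxD⟩
  rw [h] at this
  exact htIR (this ▸ hxIR)

end Helpers

section MinDom

variable {V : Type*}

private lemma exists_minDom [Fintype V] (G : SimpleGraph V) (E : Set V)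
    (hE : Dominates G E Set.univ) : ∃ D, D ⊆ E ∧ IsMinDomSet G D := by
  classical
  by_cases h : ∀ D' : Set V, D' ⊂ E → ¬ Dominates G D' Set.univ
  · exact ⟨E, subset_rfl, hE, h⟩
  · push_neg at h
    obtain ⟨D', hsub, hdom⟩ := h
    have hlt : D'.ncard < E.ncard := Set.ncard_lt_ncard hsub (Set.toFinite E)
    obtain ⟨D, hDsub, hmin⟩ := exists_minDom G D' hdom
    exact ⟨D, hDsub.trans hsub.subset, hmin⟩
termination_by E.ncard

private lemma exists_derivedFlag {G : SimpleGraph V} {IR D : Set V}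
    (hIR : IsIrredundantSet G IR) (hD : IsMinDomSet G D) {d : V} (hd : d ∈ D) :
    ∃ x ∈ IR, cnbr G x ∩ D = {d} := by
  have hss : D \ {d} ⊂ D := Set.sdiff_singleton_ssubset.mpr hd
  have hnd := hD.2 _ hss
  rw [Dominates] at hnd
  obtain ⟨w, -, hw⟩ := Set.not_subset.mp hnd
  have hdomw : ∀ u : V, ∃ y ∈ D, u ∈ cnbr G y := by
    intro u
    exact mem_cnbrSet_iff.mp (hD.1 (Set.mem_univ u))
  have honly : ∀ y ∈ D, w ∈ cnbr G y → y = d := by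
    intro y hy hwy
    by_contra hne
    exact hw (mem_cnbrSet_iff.mpr ⟨y, ⟨hy, hne⟩, hwy⟩)
  obtain ⟨x, hxIR, hxsub⟩ := hIR.1 w
  refine ⟨x, hxIR, ?_⟩
  have hsub2 : cnbr G x ∩ D ⊆ {d} := by
    rintro y ⟨hy1, hy2⟩
    have : w ∈ cnbr G y := by
      have : y ∈ cnbr G w := hxsub hy1
      exact mem_cnbr_symm this
    exact honly y hy2 this
  obtain ⟨y, hyD, hxy⟩ := hdomw x
  have hyd : y = d := hsub2 ⟨mem_cnbr_symm hxy, hyD⟩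
  apply Set.eq_singleton_iff_unique_mem.mpr
  exact ⟨⟨hyd ▸ mem_cnbr_symm hxy, hyd ▸ hyD⟩, fun z hz => hsub2 hz⟩

private lemma builder [Fintype V] {G : SimpleGraph V} {IR : Set V} (A' : Set V)
    (hA' : A' ⊆ IRᶜ) (f : V → V)
    (hfIR : ∀ b ∈ A', f b ∈ IR) (hfpriv : ∀ b ∈ A', cnbr G (f b) ∩ A' = {b})
    (hdom : Dominates G (A' ∪ (IR \ ⋃ b ∈ A', cnbr G (f b))) Set.univ) :
    memDRN G IR A' := by
  classical
  obtain ⟨D', hD'sub, hD'min⟩ := exists_minDom G _ hdom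
  refine ⟨D', hD'min, ?_⟩
  apply Set.Subset.antisymm
  · intro b hb
    have hbIRc : b ∈ IRᶜ := hA' hb
    have hfb := hfpriv b hb
    obtain ⟨y, hyD', hfy⟩ := mem_cnbrSet_iff.mp (hD'min.1 (Set.mem_univ (f b)))
    have hy2 : y ∈ cnbr G (f b) := mem_cnbr_symm hfy
    rcases hD'sub hyD' with hyA | ⟨hyIR, hyne⟩
    · have : y = b := by
        have : y ∈ cnbr G (f b) ∩ A' := ⟨hy2, hyA⟩
        rwa [hfb] at this
      exact ⟨this ▸ hyD', hbIRc⟩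
    · exfalso
      exact hyne (Set.mem_biUnion hb hy2)
  · rintro y ⟨hyD', hyIRc⟩
    rcases hD'sub hyD' with hyA | ⟨hyIR, -⟩
    · exact hyA
    · exact absurd hyIR hyIRc

end MinDom


section AlphaBeta

variable {V : Type*} {G : SimpleGraph V}

private lemma ne_of_mem_notMem {S : Set V} {x y : V} (hx : x ∈ S) (hy : y ∉ S) : x ≠ y :=
  fun h => hy (h ▸ hx)

private lemma alphaP8 (hch : Chordal G) (hP8 : PkFree G 8) {D IR : Set V}
    {a a' u x1 b1 b1' w x2 : V}
    (haD : a ∈ D) (ha'D : a' ∈ D) (hb1D : b1 ∈ D) (hb1'D : b1' ∈ D)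
    (haIR : a ∉ IR) (ha'IR : a' ∉ IR) (hb1IR : b1 ∉ IR) (hb1'IR : b1' ∉ IR)
    (hwIR : w ∈ IR) (hx1IR : x1 ∈ IR) (hx2IR : x2 ∈ IR)
    (hw : cnbr G w ∩ D = {a'}) (hx1 : cnbr G x1 ∩ D = {b1}) (hx2 : cnbr G x2 ∩ D = {b1'})
    (haa' : G.Adj a a') (hb1b1' : G.Adj b1 b1')
    (hne_b1a : b1 ≠ a) (hne_b1'a : b1' ≠ a)
    (hua : u ∈ cnbr G a) (hUa' : u ∉ cnbr G a') (hUb1 : u ∉ cnbr G b1) (hUb1' : u ∉ cnbr G b1')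
    (hux1 : u ∈ cnbr G x1) : False := by
  have d02 : w ≠ a := ne_of_mem_notMem hwIR haIR
  have d05 : w ≠ b1 := ne_of_mem_notMem hwIR hb1IR
  have d06 : w ≠ b1' := ne_of_mem_notMem hwIR hb1'IR
  have d24 : a ≠ x1 := (ne_of_mem_notMem hx1IR haIR).symm
  have d14 : a' ≠ x1 := (ne_of_mem_notMem hx1IR ha'IR).symm
  have d46 : x1 ≠ b1' := ne_of_mem_notMem hx1IR hb1'IR
  have d27 : a ≠ x2 := (ne_of_mem_notMem hx2IR haIR).symm
  have d17 : a' ≠ x2 := (ne_of_mem_notMem hx2IR ha'IR).symm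
  have d57 : b1 ≠ x2 := (ne_of_mem_notMem hx2IR hb1IR).symm
  have d13 : a' ≠ u := (ne_of_notMem hUa').symm
  have d35 : u ≠ b1 := ne_of_notMem hUb1
  have d36 : u ≠ b1' := ne_of_notMem hUb1'
  have dua : u ≠ a := fun h => hUa' (by rw [h] at hua ⊢; exact mem_cnbr_of_adj haa'.symm)
  have e0 : G.Adj w a' :=
    adj_of_mem_of_ne (flag_tgt_mem hw) (ne_of_mem_notMem hwIR ha'IR).symm
  have e1 : G.Adj a' a := haa'.symm
  have e2 : G.Adj a u := adj_of_mem_of_ne hua dua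
  have hb1x1 : b1 ∈ cnbr G x1 := flag_tgt_mem hx1
  have dux1 : u ≠ x1 := fun h => hUb1 (mem_cnbr_symm (by rw [h]; exact hb1x1))
  have e3 : G.Adj u x1 := (adj_of_mem_of_ne hux1 dux1).symm
  have e4 : G.Adj x1 b1 := adj_of_mem_of_ne hb1x1 (ne_of_mem_notMem hx1IR hb1IR).symm
  have e5 : G.Adj b1 b1' := hb1b1'
  have hb1'x2 : b1' ∈ cnbr G x2 := flag_tgt_mem hx2
  have e6 : G.Adj b1' x2 :=
    (adj_of_mem_of_ne hb1'x2 (ne_of_mem_notMem hx2IR hb1'IR).symm).symm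
  have n02 : ¬ G.Adj w a := fun h => flag_notMem hw haD haa'.ne (mem_cnbr_of_adj h)
  have n24 : ¬ G.Adj a x1 :=
    fun h => flag_notMem hx1 haD hne_b1a.symm (mem_cnbr_of_adj h.symm)
  have n13 : ¬ G.Adj a' u := not_adj_of_notMem hUa'
  have n35 : ¬ G.Adj u b1 := fun h => not_adj_of_notMem hUb1 h.symm
  have n36 : ¬ G.Adj u b1' := fun h => not_adj_of_notMem hUb1' h.symm
  have hb1a' : b1 ≠ a' := by
    intro h
    subst h
    exact noC4_s5 hch e2 e3 e4 e1 n24 d24 n35 d35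
  have n14 : ¬ G.Adj a' x1 :=
    fun h => flag_notMem hx1 ha'D hb1a'.symm (mem_cnbr_of_adj h.symm)
  have d15 : a' ≠ b1 := hb1a'.symm
  have d25 : a ≠ b1 := hne_b1a.symm
  have n25 : ¬ G.Adj a b1 := fun h => noC4_s5 hch e2 e3 e4 h.symm n24 d24 n35 d35
  have n15 : ¬ G.Adj a' b1 := fun h =>
    noC5_s5 hch e1 e2 e3 e4 h.symm n13 d13 n14 d14 n24 d24 n25 d25 n35 d35
  have d16 : a' ≠ b1' := fun h => n15 (by rw [h]; exact e5.symm)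
  have d26 : a ≠ b1' := hne_b1'a.symm
  have n46 : ¬ G.Adj x1 b1' :=
    fun h => flag_notMem hx1 hb1'D e5.ne' (mem_cnbr_of_adj h)
  have n26 : ¬ G.Adj a b1' := fun h =>
    noC5_s5 hch e2 e3 e4 e5 h.symm n24 d24 n25 d25 n35 d35 n36 d36 n46 d46
  have n16 : ¬ G.Adj a' b1' := fun h =>
    noC6_s5 hch e1 e2 e3 e4 e5 h.symm n13 d13 n14 d14 n15 d15 n24 d24 n25 d25 n26 d26
      n35 d35 n36 d36 n46 d46
  have d47 : x1 ≠ x2 := flag_ne hx1 hx2 e5.ne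
  have n57 : ¬ G.Adj b1 x2 :=
    fun h => flag_notMem hx2 hb1D e5.ne (mem_cnbr_of_adj h.symm)
  have n47 : ¬ G.Adj x1 x2 := fun h =>
    noC4_s5 hch e4 e5 e6 h.symm n46 d46 n57 d57
  have d37 : u ≠ x2 := fun h => hUb1' (mem_cnbr_symm (by rw [h]; exact hb1'x2))
  have n37 : ¬ G.Adj u x2 := fun h =>
    noC5_s5 hch e3 e4 e5 e6 h.symm n35 d35 n36 d36 n46 d46 n47 d47 n57 d57
  have d03 : w ≠ u :=
    fun h => hUa' (by rw [← h]; exact mem_cnbr_symm (flag_tgt_mem hw))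
  have n03 : ¬ G.Adj w u := fun h =>
    noC4_s5 hch e0 e1 e2 h.symm n02 d02 n13 d13
  have d04 : w ≠ x1 := flag_ne hw hx1 hb1a'.symm
  have n04 : ¬ G.Adj w x1 := fun h =>
    noC5_s5 hch e0 e1 e2 e3 h.symm n02 d02 n03 d03 n13 d13 n14 d14 n24 d24
  have n05 : ¬ G.Adj w b1 :=
    fun h => flag_notMem hw hb1D hb1a' (mem_cnbr_of_adj h)
  have n06 : ¬ G.Adj w b1' :=
    fun h => flag_notMem hw hb1'D d16.symm (mem_cnbr_of_adj h)
  have n17 : ¬ G.Adj a' x2 :=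
    fun h => flag_notMem hx2 ha'D d16 (mem_cnbr_of_adj h.symm)
  have n27 : ¬ G.Adj a x2 :=
    fun h => flag_notMem hx2 haD d26 (mem_cnbr_of_adj h.symm)
  have d07 : w ≠ x2 := flag_ne hw hx2 d16
  have n07 : ¬ G.Adj w x2 := fun h =>
    noC8 hch e0 e1 e2 e3 e4 e5 e6 h.symm n02 d02 n03 d03 n04 d04 n05 d05 n06 d06
      n13 d13 n14 d14 n15 d15 n16 d16 n17 d17 n24 d24 n25 d25 n26 d26 n27 d27
      n35 d35 n36 d36 n37 d37 n46 d46 n47 d47 n57 d57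
  exact noP8 hP8 e0 e1 e2 e3 e4 e5 e6 n02 d02 n03 d03 n04 d04 n05 d05 n06 d06 n07 d07
    n13 d13 n14 d14 n15 d15 n16 d16 n17 d17 n24 d24 n25 d25 n26 d26 n27 d27
    n35 d35 n36 d36 n37 d37 n46 d46 n47 d47 n57 d57

private lemma betaP8 (hch : Chordal G) (hP8 : PkFree G 8) {D IR : Set V}
    {b2 s u x1 b1 b1' xb x2 : V}
    (hb2D : b2 ∈ D) (hb1D : b1 ∈ D) (hb1'D : b1' ∈ D) (hsD : s ∈ D)
    (hb2IR : b2 ∉ IR) (hb1IR : b1 ∉ IR) (hb1'IR : b1' ∉ IR) (hsIR : s ∈ IR)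
    (hxbIR : xb ∈ IR) (hx1IR : x1 ∈ IR) (hx2IR : x2 ∈ IR)
    (hxb : cnbr G xb ∩ D = {b2}) (hx1 : cnbr G x1 ∩ D = {b1}) (hx2 : cnbr G x2 ∩ D = {b1'})
    (hb2b1 : b2 ≠ b1) (hb2b1' : b2 ≠ b1')
    (hb1b1' : G.Adj b1 b1')
    (hsb2 : s ∈ cnbr G b2) (hus : u ∈ cnbr G s) (hux1 : u ∈ cnbr G x1)
    (hUb2 : u ∉ cnbr G b2) (hUb1 : u ∉ cnbr G b1) (hUb1' : u ∉ cnbr G b1') : False := by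
  have hxbD : xb ∉ D := flag_not_in_D hxb hxbIR hb2IR
  have hx1D : x1 ∉ D := flag_not_in_D hx1 hx1IR hb1IR
  have hx2D : x2 ∉ D := flag_not_in_D hx2 hx2IR hb1'IR
  have d02 : xb ≠ s := fun h => hxbD (by rw [h]; exact hsD)
  have d05 : xb ≠ b1 := ne_of_mem_notMem hxbIR hb1IR
  have d06 : xb ≠ b1' := ne_of_mem_notMem hxbIR hb1'IR
  have d04 : xb ≠ x1 := flag_ne hxb hx1 hb2b1
  have d07 : xb ≠ x2 := flag_ne hxb hx2 hb2b1'
  have d13 : b2 ≠ u := (ne_of_notMem hUb2).symm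
  have d14 : b2 ≠ x1 := (ne_of_mem_notMem hx1IR hb2IR).symm
  have d15 : b2 ≠ b1 := hb2b1
  have d16 : b2 ≠ b1' := hb2b1'
  have d17 : b2 ≠ x2 := (ne_of_mem_notMem hx2IR hb2IR).symm
  have d24 : s ≠ x1 := fun h => hx1D (by rw [← h]; exact hsD)
  have d25 : s ≠ b1 := ne_of_mem_notMem hsIR hb1IR
  have d26 : s ≠ b1' := ne_of_mem_notMem hsIR hb1'IR
  have d27 : s ≠ x2 := fun h => hx2D (by rw [← h]; exact hsD)
  have d35 : u ≠ b1 := ne_of_notMem hUb1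
  have d36 : u ≠ b1' := ne_of_notMem hUb1'
  have d46 : x1 ≠ b1' := ne_of_mem_notMem hx1IR hb1'IR
  have d47 : x1 ≠ x2 := flag_ne hx1 hx2 hb1b1'.ne
  have d57 : b1 ≠ x2 := (ne_of_mem_notMem hx2IR hb1IR).symm
  have hb2xb : b2 ∈ cnbr G xb := flag_tgt_mem hxb
  have e0 : G.Adj xb b2 :=
    adj_of_mem_of_ne hb2xb (ne_of_mem_notMem hxbIR hb2IR).symm
  have e1 : G.Adj b2 s :=
    adj_of_mem_of_ne hsb2 (ne_of_mem_notMem hsIR hb2IR)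
  have dus : u ≠ s := fun h => hUb2 (mem_cnbr_symm (by rw [h]; exact mem_cnbr_symm hsb2))
  have e2 : G.Adj s u := adj_of_mem_of_ne hus dus
  have hb1x1 : b1 ∈ cnbr G x1 := flag_tgt_mem hx1
  have dux1 : u ≠ x1 := fun h => hUb1 (mem_cnbr_symm (by rw [h]; exact hb1x1))
  have e3 : G.Adj u x1 := (adj_of_mem_of_ne hux1 dux1).symm
  have e4 : G.Adj x1 b1 := adj_of_mem_of_ne hb1x1 (ne_of_mem_notMem hx1IR hb1IR).symm
  have e5 : G.Adj b1 b1' := hb1b1'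
  have hb1'x2 : b1' ∈ cnbr G x2 := flag_tgt_mem hx2
  have e6 : G.Adj b1' x2 :=
    (adj_of_mem_of_ne hb1'x2 (ne_of_mem_notMem hx2IR hb1'IR).symm).symm
  have n02 : ¬ G.Adj xb s :=
    fun h => flag_notMem hxb hsD (ne_of_mem_notMem hsIR hb2IR) (mem_cnbr_of_adj h)
  have n13 : ¬ G.Adj b2 u := not_adj_of_notMem hUb2
  have n14 : ¬ G.Adj b2 x1 :=
    fun h => flag_notMem hx1 hb2D hb2b1 (mem_cnbr_of_adj h.symm)
  have n24 : ¬ G.Adj s x1 :=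
    fun h => flag_notMem hx1 hsD d25 (mem_cnbr_of_adj h.symm)
  have n35 : ¬ G.Adj u b1 := fun h => not_adj_of_notMem hUb1 h.symm
  have n36 : ¬ G.Adj u b1' := fun h => not_adj_of_notMem hUb1' h.symm
  have d03 : xb ≠ u := fun h => hUb2 (by rw [← h]; exact mem_cnbr_symm hb2xb)
  have n03 : ¬ G.Adj xb u := fun h =>
    noC4_s5 hch e0 e1 e2 h.symm n02 d02 n13 d13
  have n04 : ¬ G.Adj xb x1 := fun h =>
    noC5_s5 hch e0 e1 e2 e3 h.symm n02 d02 n03 d03 n13 d13 n14 d14 n24 d24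
  have n05 : ¬ G.Adj xb b1 :=
    fun h => flag_notMem hxb hb1D hb2b1.symm (mem_cnbr_of_adj h)
  have n06 : ¬ G.Adj xb b1' :=
    fun h => flag_notMem hxb hb1'D hb2b1'.symm (mem_cnbr_of_adj h)
  have n25 : ¬ G.Adj s b1 := fun h => noC4_s5 hch e2 e3 e4 h.symm n24 d24 n35 d35
  have n15 : ¬ G.Adj b2 b1 := fun h =>
    noC5_s5 hch e1 e2 e3 e4 h.symm n13 d13 n14 d14 n24 d24 n25 d25 n35 d35
  have n46 : ¬ G.Adj x1 b1' :=
    fun h => flag_notMem hx1 hb1'D e5.ne' (mem_cnbr_of_adj h)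
  have n26 : ¬ G.Adj s b1' := fun h =>
    noC5_s5 hch e2 e3 e4 e5 h.symm n24 d24 n25 d25 n35 d35 n36 d36 n46 d46
  have n16 : ¬ G.Adj b2 b1' := fun h =>
    noC6_s5 hch e1 e2 e3 e4 e5 h.symm n13 d13 n14 d14 n15 d15 n24 d24 n25 d25 n26 d26
      n35 d35 n36 d36 n46 d46
  have n57 : ¬ G.Adj b1 x2 :=
    fun h => flag_notMem hx2 hb1D e5.ne (mem_cnbr_of_adj h.symm)
  have n47 : ¬ G.Adj x1 x2 := fun h =>
    noC4_s5 hch e4 e5 e6 h.symm n46 d46 n57 d57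
  have d37 : u ≠ x2 := fun h => hUb1' (mem_cnbr_symm (by rw [h]; exact hb1'x2))
  have n37 : ¬ G.Adj u x2 := fun h =>
    noC5_s5 hch e3 e4 e5 e6 h.symm n35 d35 n36 d36 n46 d46 n47 d47 n57 d57
  have n17 : ¬ G.Adj b2 x2 :=
    fun h => flag_notMem hx2 hb2D hb2b1' (mem_cnbr_of_adj h.symm)
  have n27 : ¬ G.Adj s x2 :=
    fun h => flag_notMem hx2 hsD d26 (mem_cnbr_of_adj h.symm)
  have n07 : ¬ G.Adj xb x2 := fun h =>
    noC8 hch e0 e1 e2 e3 e4 e5 e6 h.symm n02 d02 n03 d03 n04 d04 n05 d05 n06 d06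
      n13 d13 n14 d14 n15 d15 n16 d16 n17 d17 n24 d24 n25 d25 n26 d26 n27 d27
      n35 d35 n36 d36 n37 d37 n46 d46 n47 d47 n57 d57
  exact noP8 hP8 e0 e1 e2 e3 e4 e5 e6 n02 d02 n03 d03 n04 d04 n05 d05 n06 d06 n07 d07
    n13 d13 n14 d14 n15 d15 n16 d16 n17 d17 n24 d24 n25 d25 n26 d26 n27 d27
    n35 d35 n36 d36 n37 d37 n46 d46 n47 d47 n57 d57

end AlphaBeta


/-- In a `P₈`-free chordal graph, `D_RN(G)` is an accessible set system. -/
theorem stmt_5 [Fintype V] (G : SimpleGraph V) (hch : Chordal G) (hP8 : PkFree G 8)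
    (IR : Set V) (hIR : IsIrredundantSet G IR)
    (A : Set V) (hA : memDRN G IR A) (hne : A.Nonempty) :
    ∃ a ∈ A, memDRN G IR (A \ {a}) := by
  classical
  obtain ⟨D, hDmin, hADef⟩ := hA
  subst hADef
  choose can hcanIR hcansub using hIR.1
  have hdomD : ∀ u : V, ∃ y ∈ D, u ∈ cnbr G y := fun u =>
    mem_cnbrSet_iff.mp (hDmin.1 (Set.mem_univ u))
  by_cases hedge : ∃ p ∈ D ∩ IRᶜ, ∃ q ∈ D ∩ IRᶜ, G.Adj p q
  · -- Case 1 : A contains an edge.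
    obtain ⟨a, ha, a', ha', haa'⟩ := hedge
    refine ⟨a, ha, ?_⟩
    set A' : Set V := (D ∩ IRᶜ) \ {a} with hA'def
    have ha'A' : a' ∈ A' := ⟨ha', fun h => haa'.ne (Set.mem_singleton_iff.mp h).symm⟩
    -- the flag function
    have flagspec : ∀ b : V, ∃ x : V, b ∈ A' →
        x ∈ IR ∧
        ((∃ b' ∈ A', b' ≠ b ∧ G.Adj b b') → cnbr G x ∩ D = {b}) ∧
        (¬ (∃ b' ∈ A', b' ≠ b ∧ G.Adj b b') → cnbr G x ⊆ cnbr G b) := by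
      intro b
      by_cases hb : b ∈ A'
      · by_cases hcb : ∃ b' ∈ A', b' ≠ b ∧ G.Adj b b'
        · obtain ⟨x, hxIR, hxD⟩ := exists_derivedFlag hIR hDmin hb.1.1
          exact ⟨x, fun _ => ⟨hxIR, fun _ => hxD, fun hn => absurd hcb hn⟩⟩
        · exact ⟨can b, fun _ => ⟨hcanIR b, fun hc => absurd hc hcb, fun _ => hcansub b⟩⟩
      · exact ⟨b, fun hb' => absurd hb' hb⟩
    choose f hf using flagspec
    have hfIR : ∀ b ∈ A', f b ∈ IR := fun b hb => (hf b hb).1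
    have hfpriv : ∀ b ∈ A', cnbr G (f b) ∩ A' = {b} := by
      intro b hb
      by_cases hcb : ∃ b' ∈ A', b' ≠ b ∧ G.Adj b b'
      · have hflag := (hf b hb).2.1 hcb
        apply Set.Subset.antisymm
        · rintro y ⟨hy1, hy2⟩
          have : y ∈ cnbr G (f b) ∩ D := ⟨hy1, hy2.1.1⟩
          rwa [hflag] at this
        · rintro y hy
          rw [Set.mem_singleton_iff] at hy
          subst hy
          exact ⟨flag_tgt_mem hflag, hb⟩
      · have hsubb := (hf b hb).2.2 hcb
        apply Set.Subset.antisymm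
        · rintro y ⟨hy1, hy2⟩
          have hyb : y ∈ cnbr G b := hsubb hy1
          rcases mem_cnbr_iff.mp hyb with h | h
          · exact h
          · exact absurd ⟨y, hy2, h.ne', h⟩ hcb
        · rintro y hy
          rw [Set.mem_singleton_iff] at hy
          subst hy
          exact ⟨mem_cnbr_symm (hsubb (self_mem_cnbr G (f y))), hb⟩
    refine builder A' (fun y hy => hy.1.2) f hfIR hfpriv ?_
    -- the hard domination claim
    intro u _
    by_contra hu
    have huA' : ∀ b ∈ A', u ∉ cnbr G b := fun b hb hmem =>
      hu (mem_cnbrSet_iff.mpr ⟨b, Or.inl hb, hmem⟩)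
    have huR : ∀ y ∈ IR \ ⋃ b ∈ A', cnbr G (f b), u ∉ cnbr G y := fun y hy hmem =>
      hu (mem_cnbrSet_iff.mpr ⟨y, Or.inr hy, hmem⟩)
    -- the canonical coverer of u is blocked
    have hu_in : u ∈ cnbr G (can u) := mem_cnbr_symm (hcansub u (self_mem_cnbr G (can u)))
    have hxuU : can u ∈ ⋃ b ∈ A', cnbr G (f b) := by
      by_contra hnot
      exact huR (can u) ⟨hcanIR u, hnot⟩ hu_in
    obtain ⟨b1, hb1A', hmem1⟩ := Set.mem_iUnion₂.mp hxuU
    have hconn1 : ∃ b' ∈ A', b' ≠ b1 ∧ G.Adj b1 b' := by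
      by_contra hnconn
      have hsubb := (hf b1 hb1A').2.2 hnconn
      have : b1 ∈ cnbr G u := hcansub u (mem_cnbr_symm (hsubb hmem1))
      exact huA' b1 hb1A' (mem_cnbr_symm this)
    have hx1D : cnbr G (f b1) ∩ D = {b1} := (hf b1 hb1A').2.1 hconn1
    have hux1 : u ∈ cnbr G (f b1) := by
      have : f b1 ∈ cnbr G u := hcansub u (mem_cnbr_symm hmem1)
      exact mem_cnbr_symm this
    obtain ⟨b1', hb1'A', hb1'ne, hb1adj⟩ := hconn1
    obtain ⟨x2, hx2IR, hx2D⟩ := exists_derivedFlag hIR hDmin hb1'A'.1.1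
    by_cases hua : u ∈ cnbr G a
    · -- α-configuration
      obtain ⟨w, hwIR, hwD⟩ := exists_derivedFlag hIR hDmin ha'.1
      exact alphaP8 hch hP8 ha.1 ha'.1 hb1A'.1.1 hb1'A'.1.1
        ha.2 ha'.2 hb1A'.1.2 hb1'A'.1.2 hwIR (hfIR b1 hb1A') hx2IR
        hwD hx1D hx2D haa' hb1adj
        (fun h => hb1A'.2 (Set.mem_singleton_iff.mpr h))
        (fun h => hb1'A'.2 (Set.mem_singleton_iff.mpr h))
        hua (huA' a' ha'A') (huA' b1 hb1A') (huA' b1' hb1'A') hux1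
    · -- β-configuration
      obtain ⟨s, hsD, hus⟩ := hdomD u
      have hsIR : s ∈ IR := by
        by_contra hsIR
        by_cases hsa : s = a
        · exact hua (hsa ▸ hus)
        · exact huA' s ⟨⟨hsD, hsIR⟩, hsa⟩ hus
      have hsU : s ∈ ⋃ b ∈ A', cnbr G (f b) := by
        by_contra hnot
        exact huR s ⟨hsIR, hnot⟩ hus
      obtain ⟨b2, hb2A', hmem2⟩ := Set.mem_iUnion₂.mp hsU
      have hnconn2 : ¬ ∃ b' ∈ A', b' ≠ b2 ∧ G.Adj b2 b' := by
        intro hconn2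
        have hflag2 := (hf b2 hb2A').2.1 hconn2
        have : s ∈ cnbr G (f b2) ∩ D := ⟨hmem2, hsD⟩
        rw [hflag2] at this
        exact hb2A'.1.2 ((Set.mem_singleton_iff.mp this) ▸ hsIR)
      have hsb2 : s ∈ cnbr G b2 := (hf b2 hb2A').2.2 hnconn2 hmem2
      have hb2b1 : b2 ≠ b1 := by
        intro h
        subst h
        exact hnconn2 ⟨b1', hb1'A', hb1'ne, hb1adj⟩
      have hb2b1' : b2 ≠ b1' := by
        intro h
        subst h
        exact hnconn2 ⟨b1, hb1A', fun hh => hb1'ne hh.symm, hb1adj.symm⟩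
      obtain ⟨xb, hxbIR, hxbD⟩ := exists_derivedFlag hIR hDmin hb2A'.1.1
      exact betaP8 hch hP8 hb2A'.1.1 hb1A'.1.1 hb1'A'.1.1 hsD
        hb2A'.1.2 hb1A'.1.2 hb1'A'.1.2 hsIR hxbIR (hfIR b1 hb1A') hx2IR
        hxbD hx1D hx2D hb2b1 hb2b1' hb1adj hsb2 hus hux1
        (huA' b2 hb2A') (huA' b1 hb1A') (huA' b1' hb1'A')
  · -- Case 2 : A is independent.
    push_neg at hedge
    obtain ⟨a, ha⟩ := hne
    refine ⟨a, ha, ?_⟩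
    set A' : Set V := (D ∩ IRᶜ) \ {a} with hA'def
    have hfpriv : ∀ b ∈ A', cnbr G (can b) ∩ A' = {b} := by
      intro b hb
      apply Set.Subset.antisymm
      · rintro y ⟨hy1, hy2⟩
        have hyb : y ∈ cnbr G b := hcansub b hy1
        rcases mem_cnbr_iff.mp hyb with h | h
        · exact h
        · exact absurd h (hedge b hb.1 y hy2.1)
      · rintro y hy
        rw [Set.mem_singleton_iff] at hy
        subst hy
        exact ⟨mem_cnbr_symm (hcansub y (self_mem_cnbr G (can y))), hb⟩
    refine builder A' (fun y hy => hy.1.2) can (fun b _ => hcanIR b) hfpriv ?_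
    intro u _
    by_cases hc : ∃ b ∈ A', u ∈ cnbr G b
    · obtain ⟨b, hb, hmem⟩ := hc
      exact mem_cnbrSet_iff.mpr ⟨b, Or.inl hb, hmem⟩
    · push_neg at hc
      have hu_in : u ∈ cnbr G (can u) := mem_cnbr_symm (hcansub u (self_mem_cnbr G (can u)))
      refine mem_cnbrSet_iff.mpr ⟨can u, Or.inr ⟨hcanIR u, ?_⟩, hu_in⟩
      intro hU
      obtain ⟨b, hbA', hmem⟩ := Set.mem_iUnion₂.mp hU
      have : b ∈ cnbr G u := hcansub u (mem_cnbr_symm ((hcansub b) hmem))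
      exact hc b hbA' (mem_cnbr_symm this)
end
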